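/- arXiv:1601.03258 — 7 statements merged into one kernel-verified Lean document; each statement's English description precedes it below -/
import Mathlib

section
/- Let q : ℝ → ℂ be continuous with ∫_ℝ (1+|x|)|q(x)| dx < ∞, and let k be a nonzero real number. Then there exists a unique bounded continuous function f : ℝ → ℂ satisfying the Volterra integral equation f(x) = e^{ikx} − ∫_x^∞ (sin(k(x−t))/k) · q(t) · f(t) dt for all x ∈ ℝ (the right Jost solution f₊(k,·)). -/
/-!
Write the equation as `f = g - V f` with `(V f)(x) = ∫_x^∞ K(x,t) f(t) dt` and
`‖K(x,t)‖ ≤ r(t)`, `r` integrable. For the tail `R(x) = ∫_x^∞ r` one has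
`∫_x^∞ r Rⁿ = R(x)ⁿ⁺¹/(n+1)`, so by induction the `n`-th iterate of `T f = g - V f` satisfies
`‖Tⁿf(x) - Tⁿh(x)‖ ≤ R(x)ⁿ/n! · ‖f - h‖∞`. Hence some iterate of `T` is a contraction of the
Banach space of bounded continuous functions, and `T` has a unique fixed point there. The Jost
equation is the case `K(x,t) = sin(k(x-t))/k · q(t)`, `r = ‖q‖/|k|`, `g(x) = e^{ikx}`.
-/

open MeasureTheory Set Filter Topology BoundedContinuousFunction
open scoped Nat NNReal

noncomputable section

def tailIntegral (r : ℝ → ℝ) (x : ℝ) : ℝ := ∫ t in Ici x, r t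

section TailIntegral

variable {r : ℝ → ℝ}

theorem norm_tailIntegral_le (hr : Integrable r) (x : ℝ) :
    ‖tailIntegral r x‖ ≤ ∫ t, ‖r t‖ :=
  (norm_integral_le_integral_norm _).trans
    (setIntegral_le_integral hr.norm (.of_forall fun _ => norm_nonneg _))

theorem tailIntegral_eq_sub_intervalIntegral (hr : Integrable r) (x : ℝ) :
    tailIntegral r x = tailIntegral r 0 - ∫ t in (0 : ℝ)..x, r t := by
  simp only [tailIntegral, integral_Ici_eq_integral_Ioi]
  rw [← intervalIntegral.integral_interval_add_Ioi (a := 0) (b := x) hr.integrableOn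
    hr.integrableOn]
  ring

theorem hasDerivAt_tailIntegral (hr : Integrable r) (hrc : Continuous r) (x : ℝ) :
    HasDerivAt (tailIntegral r) (-r x) x := by
  have hFTC : HasDerivAt (fun y => ∫ t in (0 : ℝ)..y, r t) (r x) x :=
    intervalIntegral.integral_hasDerivAt_right hr.intervalIntegrable
      hrc.stronglyMeasurable.stronglyMeasurableAtFilter hrc.continuousAt
  rw [funext (tailIntegral_eq_sub_intervalIntegral hr)]
  exact hFTC.const_sub _

theorem continuous_tailIntegral (hr : Integrable r) (hrc : Continuous r) :
    Continuous (tailIntegral r) :=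
  continuous_iff_continuousAt.2 fun x => (hasDerivAt_tailIntegral hr hrc x).continuousAt

theorem tendsto_tailIntegral_atTop (hr : Integrable r) :
    Tendsto (tailIntegral r) atTop (𝓝 0) := by
  have h := (intervalIntegral_tendsto_integral_Ioi 0 hr.integrableOn tendsto_id).const_sub
    (tailIntegral r 0)
  have h₀ : tailIntegral r 0 - ∫ t in Ioi 0, r t = 0 := by
    rw [tailIntegral, integral_Ici_eq_integral_Ioi, sub_self]
  rw [h₀] at h
  exact h.congr fun x => (tailIntegral_eq_sub_intervalIntegral hr x).symm

theorem integrable_mul_tailIntegral_pow (hr : Integrable r) (hrc : Continuous r) (n : ℕ) :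
    Integrable fun t => r t * tailIntegral r t ^ n :=
  hr.mul_bdd ((continuous_tailIntegral hr hrc).pow n).aestronglyMeasurable
    (c := (∫ t, ‖r t‖) ^ n) (.of_forall fun t => by
      rw [norm_pow]
      exact pow_le_pow_left₀ (norm_nonneg _) (norm_tailIntegral_le hr t) n)

theorem integral_Ici_mul_tailIntegral_pow (hr : Integrable r) (hrc : Continuous r) (n : ℕ)
    (x : ℝ) :
    ∫ t in Ici x, r t * tailIntegral r t ^ n = tailIntegral r x ^ (n + 1) / (n + 1) := by
  have hF : ∀ y, HasDerivAt (fun y => -tailIntegral r y ^ (n + 1) / (n + 1))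
      (r y * tailIntegral r y ^ n) y := fun y => by
    refine ((((hasDerivAt_tailIntegral hr hrc y).fun_pow (n + 1)).neg).div_const
      ((n : ℝ) + 1)).congr_deriv ?_
    field_simp
    push_cast
    ring
  have hlim : Tendsto (fun y => -tailIntegral r y ^ (n + 1) / (n + 1)) atTop (𝓝 0) := by
    simpa using (((tendsto_tailIntegral_atTop hr).pow (n + 1)).neg).div_const ((n : ℝ) + 1)
  rw [integral_Ici_eq_integral_Ioi, integral_Ioi_of_hasDerivAt_of_tendsto
    (hF x).continuousAt.continuousWithinAt (fun y _ => hF y)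
    (integrable_mul_tailIntegral_pow hr hrc n).integrableOn hlim]
  ring

end TailIntegral

section Volterra

variable {E : Type*} [NormedAddCommGroup E] [NormedSpace ℂ E]
  {K : ℝ → ℝ → ℂ} {r : ℝ → ℝ}

theorem norm_kernel_smul_le (hKr : ∀ x t, ‖K x t‖ ≤ r t) (x t : ℝ) {w : E} {c : ℝ}
    (hw : ‖w‖ ≤ c) : ‖K x t • w‖ ≤ r t * c := by
  rw [norm_smul]
  exact mul_le_mul (hKr x t) hw (norm_nonneg _) ((norm_nonneg _).trans (hKr x t))

theorem integrable_kernel_smul (hK : Continuous (Function.uncurry K))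
    (hKr : ∀ x t, ‖K x t‖ ≤ r t) (hr : Integrable r) (f : ℝ →ᵇ E) (x : ℝ) :
    Integrable fun t => K x t • f t :=
  (hr.mul_const ‖f‖).mono'
    ((hK.comp (continuous_const.prodMk continuous_id)).smul f.continuous).aestronglyMeasurable
    (.of_forall fun t => norm_kernel_smul_le hKr x t (f.norm_coe_le_norm t))

/-- For fixed `t` the integrand jumps only at `x = t`, a null set, so dominated convergence
applies. -/
theorem continuous_integral_Ici_kernel_smul (hK : Continuous (Function.uncurry K))
    (hKr : ∀ x t, ‖K x t‖ ≤ r t) (hr : Integrable r) (f : ℝ →ᵇ E) :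
    Continuous fun x => ∫ t in Ici x, K x t • f t := by
  simp_rw [← integral_indicator measurableSet_Ici]
  refine continuous_iff_continuousAt.2 fun x₀ => continuousAt_of_dominated
    (bound := fun t => r t * ‖f‖) (.of_forall fun x => ?_) (.of_forall fun x => ?_)
    (hr.mul_const _) ?_
  · exact (integrable_kernel_smul hK hKr hr f x).aestronglyMeasurable.indicator measurableSet_Ici
  · exact .of_forall fun t => (norm_indicator_le_norm_self _ t).trans
      (norm_kernel_smul_le hKr x t (f.norm_coe_le_norm t))
  · filter_upwards [compl_mem_ae_iff.2 (measure_singleton x₀)] with t ht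
    rcases lt_or_gt_of_ne (Ne.symm ht) with hlt | hgt
    · have hcont : ContinuousAt (fun x => K x t • f t) x₀ :=
        ((hK.comp (continuous_id.prodMk continuous_const)).smul continuous_const).continuousAt
      refine hcont.congr (eventually_lt_nhds hlt |>.mono fun x hx => ?_)
      exact (indicator_of_mem (mem_Ici.2 hx.le) (fun t => K x t • f t)).symm
    · refine (continuousAt_const (y := (0 : E))).congr
        (eventually_gt_nhds hgt |>.mono fun x hx => ?_)
      exact (indicator_of_notMem (notMem_Ici.2 hx) (fun t => K x t • f t)).symm

theorem norm_integral_Ici_kernel_smul_le (hKr : ∀ x t, ‖K x t‖ ≤ r t) {w : ℝ → E}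
    {b : ℝ → ℝ} {x : ℝ} (hb : IntegrableOn (fun t => r t * b t) (Ici x))
    (hw : ∀ t, ‖w t‖ ≤ b t) : ‖∫ t in Ici x, K x t • w t‖ ≤ ∫ t in Ici x, r t * b t :=
  norm_integral_le_of_norm_le hb (.of_forall fun t => norm_kernel_smul_le hKr x t (hw t))

theorem norm_integral_Ici_kernel_smul_le_integral_mul_norm (hKr : ∀ x t, ‖K x t‖ ≤ r t)
    (hr : Integrable r) (f : ℝ →ᵇ E) (x : ℝ) :
    ‖∫ t in Ici x, K x t • f t‖ ≤ (∫ t, r t) * ‖f‖ := by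
  rw [← integral_mul_const]
  exact (norm_integral_Ici_kernel_smul_le hKr (hr.mul_const _).integrableOn
    f.norm_coe_le_norm).trans (setIntegral_le_integral (hr.mul_const _) (.of_forall fun t =>
      mul_nonneg ((norm_nonneg _).trans (hKr t t)) (norm_nonneg _)))

variable (hK : Continuous (Function.uncurry K)) (hKr : ∀ x t, ‖K x t‖ ≤ r t)
  (hr : Integrable r)

def volterraOperator (f : ℝ →ᵇ E) : ℝ →ᵇ E :=
  .ofNormedAddCommGroup (fun x => ∫ t in Ici x, K x t • f t)
    (continuous_integral_Ici_kernel_smul hK hKr hr f) _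
    (norm_integral_Ici_kernel_smul_le_integral_mul_norm hKr hr f)

theorem volterraOperator_apply (f : ℝ →ᵇ E) (x : ℝ) :
    volterraOperator hK hKr hr f x = ∫ t in Ici x, K x t • f t :=
  rfl

theorem volterraOperator_sub (f h : ℝ →ᵇ E) :
    volterraOperator hK hKr hr (f - h) =
      volterraOperator hK hKr hr f - volterraOperator hK hKr hr h := by
  ext x
  simp only [BoundedContinuousFunction.sub_apply, volterraOperator_apply, smul_sub]
  exact integral_sub (integrable_kernel_smul hK hKr hr f x).integrableOn
    (integrable_kernel_smul hK hKr hr h x).integrableOn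

def volterraMap (g f : ℝ →ᵇ E) : ℝ →ᵇ E :=
  g - volterraOperator hK hKr hr f

theorem norm_iterate_volterraMap_sub_apply_le (hrc : Continuous r) (g : ℝ →ᵇ E) (n : ℕ)
    (f₁ f₂ : ℝ →ᵇ E) (x : ℝ) :
    ‖(volterraMap hK hKr hr g)^[n] f₁ x - (volterraMap hK hKr hr g)^[n] f₂ x‖ ≤
      tailIntegral r x ^ n / n ! * dist f₁ f₂ := by
  induction n generalizing x with
  | zero => simpa [dist_eq_norm] using dist_coe_le_dist (f := f₁) (g := f₂) x
  | succ n ih =>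
    set T := volterraMap hK hKr hr g
    rw [Function.iterate_succ_apply', Function.iterate_succ_apply']
    set u := T^[n] f₁
    set v := T^[n] f₂
    have hTuv : T u x - T v x = volterraOperator hK hKr hr (v - u) x := by
      rw [volterraOperator_sub]
      simp only [T, volterraMap, BoundedContinuousFunction.sub_apply]
      abel
    have hdom :
        IntegrableOn (fun t => r t * (tailIntegral r t ^ n / n ! * dist f₁ f₂)) (Ici x) := by
      simpa only [mul_div_assoc', mul_assoc, mul_comm, mul_left_comm] using
        ((integrable_mul_tailIntegral_pow hr hrc n).mul_const (dist f₁ f₂ / n !)).integrableOn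
    calc ‖T u x - T v x‖
        ≤ ∫ t in Ici x, r t * (tailIntegral r t ^ n / n ! * dist f₁ f₂) := by
          rw [hTuv]
          refine norm_integral_Ici_kernel_smul_le hKr hdom fun t => ?_
          rw [BoundedContinuousFunction.sub_apply, norm_sub_rev]
          exact ih t
      _ = (∫ t in Ici x, r t * tailIntegral r t ^ n) * (dist f₁ f₂ / n !) := by
          rw [← integral_mul_const]
          congr 1 with t
          ring
      _ = tailIntegral r x ^ (n + 1) / (n + 1)! * dist f₁ f₂ := by
          rw [integral_Ici_mul_tailIntegral_pow hr hrc, Nat.factorial_succ]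
          push_cast
          field_simp

theorem dist_iterate_volterraMap_le (hrc : Continuous r) (g : ℝ →ᵇ E) (n : ℕ)
    (f₁ f₂ : ℝ →ᵇ E) :
    dist ((volterraMap hK hKr hr g)^[n] f₁) ((volterraMap hK hKr hr g)^[n] f₂) ≤
      (∫ t, ‖r t‖) ^ n / n ! * dist f₁ f₂ := by
  refine (BoundedContinuousFunction.dist_le (by positivity)).2 fun x => ?_
  rw [dist_eq_norm]
  refine (norm_iterate_volterraMap_sub_apply_le hK hKr hr hrc g n f₁ f₂ x).trans ?_
  gcongr ?_ / _ * _
  calc tailIntegral r x ^ n ≤ |tailIntegral r x| ^ n := (le_abs_self _).trans (abs_pow _ _).le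
    _ ≤ _ := pow_le_pow_left₀ (abs_nonneg _) (norm_tailIntegral_le hr x) n

theorem exists_contractingWith_iterate_volterraMap (hrc : Continuous r) (g : ℝ →ᵇ E) :
    ∃ (n : ℕ) (c : ℝ≥0), ContractingWith c (volterraMap hK hKr hr g)^[n] := by
  obtain ⟨n, hn⟩ := ((FloorSemiring.tendsto_pow_div_factorial_atTop
    (∫ t, ‖r t‖)).eventually_lt_const one_pos).exists
  exact ⟨n, ⟨_, by positivity⟩, hn,
    LipschitzWith.of_dist_le_mul (dist_iterate_volterraMap_le hK hKr hr hrc g n)⟩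

end Volterra

theorem existsUnique_volterra_solution {E : Type*} [NormedAddCommGroup E] [NormedSpace ℂ E]
    [CompleteSpace E] {K : ℝ → ℝ → ℂ} {r : ℝ → ℝ} (hK : Continuous (Function.uncurry K))
    (hKr : ∀ x t, ‖K x t‖ ≤ r t) (hr : Integrable r) (hrc : Continuous r) (g : ℝ →ᵇ E) :
    ∃! f : ℝ → E, Continuous f ∧ (∃ C, ∀ x, ‖f x‖ ≤ C) ∧
      ∀ x, f x = g x - ∫ t in Ici x, K x t • f t := by
  obtain ⟨n, c, hc⟩ := exists_contractingWith_iterate_volterraMap hK hKr hr hrc g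
  set T := volterraMap hK hKr hr g
  set p := hc.fixedPoint
  have hp : Function.IsFixedPt T p := hc.isFixedPt_fixedPoint_iterate
  refine ⟨p, ⟨p.continuous, ⟨‖p‖, p.norm_coe_le_norm⟩, fun x => ?_⟩, ?_⟩
  · exact (congrFun (congrArg (⇑) hp) x).symm
  · rintro f ⟨hf, ⟨C, hC⟩, hf_eq⟩
    have hfix : Function.IsFixedPt T (.ofNormedAddCommGroup f hf C hC) :=
      BoundedContinuousFunction.ext fun x => (hf_eq x).symm
    exact congrArg (⇑) (hc.fixedPoint_unique (hfix.iterate n))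

theorem right_jost_solution_exists_unique_general (q : ℝ → ℂ) (hq : Continuous q)
    (hq' : Integrable (fun x => (1 + |x|) * ‖q x‖)) (k : ℝ) :
    ∃! f : ℝ → ℂ, Continuous f ∧ (∃ C : ℝ, ∀ x, ‖f x‖ ≤ C) ∧
      ∀ x : ℝ, f x = Complex.exp (Complex.I * k * x) -
        ∫ t in Set.Ici x, ((Real.sin (k * (x - t)) / k : ℝ) : ℂ) * q t * f t := by
  have hq_int : Integrable fun t => ‖q t‖ :=
    hq'.mono' hq.norm.aestronglyMeasurable (.of_forall fun t => by
      rw [norm_norm]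
      exact le_mul_of_one_le_left (norm_nonneg _) (le_add_of_nonneg_right (abs_nonneg t)))
  have hK : Continuous
      (Function.uncurry fun x t => ((Real.sin (k * (x - t)) / k : ℝ) : ℂ) * q t) := by
    fun_prop
  have hKr : ∀ x t, ‖((Real.sin (k * (x - t)) / k : ℝ) : ℂ) * q t‖ ≤ ‖q t‖ / |k| :=
    fun x t => by
      rw [norm_mul, Complex.norm_real, Real.norm_eq_abs, abs_div, div_mul_eq_mul_div]
      gcongr
      exact mul_le_of_le_one_left (norm_nonneg _) (Real.abs_sin_le_one _)
  let planeWave : ℝ →ᵇ ℂ := .ofNormedAddCommGroup (fun x => Complex.exp (Complex.I * k * x))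
    (by fun_prop) 1 fun x => by simp [Complex.norm_exp]
  exact existsUnique_volterra_solution hK hKr (hq_int.div_const _) (hq.norm.div_const _)
    planeWave

/-- Existence and uniqueness of the right Jost solution `f₊(k,·)`: for a Faddeev-class
potential `q` and nonzero real `k`, there is a unique bounded continuous `f : ℝ → ℂ` with
`f x = e^{ikx} − ∫_x^∞ (sin(k(x−t))/k) q(t) f(t) dt`. -/
theorem right_jost_solution_exists_unique (q : ℝ → ℂ) (hq : Continuous q)
    (hq' : Integrable (fun x => (1 + |x|) * ‖q x‖)) (k : ℝ) (hk : k ≠ 0) :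
    ∃! f : ℝ → ℂ, Continuous f ∧ (∃ C : ℝ, ∀ x, ‖f x‖ ≤ C) ∧
      ∀ x : ℝ, f x = Complex.exp (Complex.I * k * x) -
        ∫ t in Set.Ici x, ((Real.sin (k * (x - t)) / k : ℝ) : ℂ) * q t * f t :=
  right_jost_solution_exists_unique_general q hq hq' k
end
end

section
/- Let q : ℝ → ℂ be continuous with ∫_ℝ (1+|x|)|q(x)| dx < ∞, let k be a nonzero real number, and let f : ℝ → ℂ be a bounded continuous function satisfying f(x) = e^{ikx} − ∫_x^∞ (sin(k(x−t))/k) · q(t) · f(t) dt for all x. Then f is twice continuously differentiable and satisfies the Liouville–Schrödinger equation −f''(x) + q(x) f(x) = k² f(x) for every x ∈ ℝ. -/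
/-!
Expanding `sin (k (x - t)) = sin (k x) cos (k t) - cos (k x) sin (k t)` writes the Volterra
integral as `k⁻¹ (sin (k x) c x - cos (k x) s x)`, where `c x = ∫_x^∞ cos (k t) q t f t` and
`s x = ∫_x^∞ sin (k t) q t f t`. Since `q f` is continuous and integrable (`q` is integrable and
`f` bounded), `c' = -cos (k x) q f` and `s' = -sin (k x) q f`. Differentiating once, the terms
coming from `c'` and `s'` cancel; differentiating again they add up to `q f` by
`sin² + cos² = 1`, and the rest is `-k²` times `f`.
-/

open MeasureTheory

theorem hasDerivAt_setIntegral_Ici {E : Type*} [NormedAddCommGroup E] [NormedSpace ℝ E]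
    [CompleteSpace E] {g : ℝ → E} (hgi : Integrable g) (hgc : Continuous g) (x : ℝ) :
    HasDerivAt (fun y => ∫ t in Set.Ici y, g t) (-g x) x := by
  have split : ∀ y, ∫ t in Set.Ici y, g t
      = ((∫ t, g t) - ∫ t in Set.Iic 0, g t) - ∫ t in (0 : ℝ)..y, g t := by
    intro y
    rw [← intervalIntegral.integral_Iic_sub_Iic hgi.integrableOn hgi.integrableOn,
      integral_Ici_eq_integral_Ioi,
      ← intervalIntegral.integral_Iic_add_Ioi (b := y) hgi.integrableOn hgi.integrableOn]
    abel
  have hprim : HasDerivAt (fun y => ∫ t in (0 : ℝ)..y, g t) (g x) x :=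
    intervalIntegral.integral_hasDerivAt_right hgi.intervalIntegrable
      (hgc.stronglyMeasurableAtFilter _ _) hgc.continuousAt
  simpa only [split, zero_sub] using hprim.const_sub ((∫ t, g t) - ∫ t in Set.Iic 0, g t)

theorem contDiff_two_of_hasDerivAt {E : Type*} [NormedAddCommGroup E] [NormedSpace ℝ E]
    {f f₁ f₂ : ℝ → E} (hf : ∀ x, HasDerivAt f (f₁ x) x) (hf₁ : ∀ x, HasDerivAt f₁ (f₂ x) x)
    (hf₂ : Continuous f₂) : ContDiff ℝ 2 f := by
  have hderiv : deriv f = f₁ := funext fun x => (hf x).deriv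
  have hderiv₁ : deriv f₁ = f₂ := funext fun x => (hf₁ x).deriv
  rw [show (2 : WithTop ℕ∞) = 1 + 1 from rfl, contDiff_succ_iff_deriv, hderiv,
    contDiff_one_iff_deriv, hderiv₁]
  exact ⟨fun x => (hf x).differentiableAt, by simp, fun x => (hf₁ x).differentiableAt, hf₂⟩

theorem hasDerivAt_ofReal_sin_mul (k x : ℝ) :
    HasDerivAt (fun y : ℝ => (Real.sin (k * y) : ℂ)) (k * Real.cos (k * x)) x := by
  simpa [mul_comm] using (((hasDerivAt_id x).const_mul k).sin).ofReal_comp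

theorem hasDerivAt_ofReal_cos_mul (k x : ℝ) :
    HasDerivAt (fun y : ℝ => (Real.cos (k * y) : ℂ)) (-(k * Real.sin (k * x))) x := by
  simpa [mul_comm] using (((hasDerivAt_id x).const_mul k).cos).ofReal_comp

theorem hasDerivAt_cexp_I_mul (k x : ℝ) :
    HasDerivAt (fun y : ℝ => Complex.exp (Complex.I * k * y))
      (Complex.I * k * Complex.exp (Complex.I * k * x)) x := by
  simpa [mul_comm] using ((hasDerivAt_id x).ofReal_comp.const_mul (Complex.I * k)).cexp

theorem MeasureTheory.Integrable.of_one_add_abs_mul_norm {q : ℝ → ℂ} (hq : AEStronglyMeasurable q)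
    (hq' : Integrable (fun x => (1 + |x|) * ‖q x‖)) : Integrable q := by
  refine hq'.mono' hq (Filter.Eventually.of_forall fun x => ?_)
  have : 0 ≤ |x| * ‖q x‖ := by positivity
  linarith

theorem MeasureTheory.Integrable.ofReal_cos_mul {g : ℝ → ℂ} (hg : Integrable g) (k : ℝ) :
    Integrable (fun t => (Real.cos (k * t) : ℂ) * g t) :=
  hg.bdd_mul (c := 1) (by fun_prop : Continuous _).aestronglyMeasurable
    (ae_of_all _ fun t => by rw [Complex.norm_real, Real.norm_eq_abs]; exact Real.abs_cos_le_one _)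

theorem MeasureTheory.Integrable.ofReal_sin_mul {g : ℝ → ℂ} (hg : Integrable g) (k : ℝ) :
    Integrable (fun t => (Real.sin (k * t) : ℂ) * g t) :=
  hg.bdd_mul (c := 1) (by fun_prop : Continuous _).aestronglyMeasurable
    (ae_of_all _ fun t => by rw [Complex.norm_real, Real.norm_eq_abs]; exact Real.abs_sin_le_one _)

theorem setIntegral_Ici_sin_mul_sub_div_mul {k : ℝ} {g : ℝ → ℂ} (hg : Integrable g) (x : ℝ) :
    ∫ t in Set.Ici x, ((Real.sin (k * (x - t)) / k : ℝ) : ℂ) * g t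
      = (k : ℂ)⁻¹ * (Real.sin (k * x) * (∫ t in Set.Ici x, (Real.cos (k * t) : ℂ) * g t)
        - Real.cos (k * x) * ∫ t in Set.Ici x, (Real.sin (k * t) : ℂ) * g t) := by
  have kernel : ∀ t, ((Real.sin (k * (x - t)) / k : ℝ) : ℂ) * g t
      = (k : ℂ)⁻¹ * (Real.sin (k * x) * ((Real.cos (k * t) : ℂ) * g t)
        - Real.cos (k * x) * ((Real.sin (k * t) : ℂ) * g t)) := by
    intro t
    rw [mul_sub, Real.sin_sub]
    push_cast
    ring
  simp_rw [kernel]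
  rw [integral_const_mul, integral_sub ((hg.ofReal_cos_mul k).integrableOn.const_mul _)
    ((hg.ofReal_sin_mul k).integrableOn.const_mul _), integral_const_mul, integral_const_mul]

section VariationOfParameters

variable {k : ℝ} {g c s : ℝ → ℂ}

theorem hasDerivAt_sin_mul_sub_cos_mul (hc : ∀ x, HasDerivAt c (-(Real.cos (k * x) * g x)) x)
    (hs : ∀ x, HasDerivAt s (-(Real.sin (k * x) * g x)) x) (x : ℝ) :
    HasDerivAt (fun y => (Real.sin (k * y) : ℂ) * c y - Real.cos (k * y) * s y)
      (k * (Real.cos (k * x) * c x + Real.sin (k * x) * s x)) x := by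
  refine (((hasDerivAt_ofReal_sin_mul k x).mul (hc x)).sub
    ((hasDerivAt_ofReal_cos_mul k x).mul (hs x))).congr_deriv ?_
  ring

theorem hasDerivAt_cos_mul_add_sin_mul (hc : ∀ x, HasDerivAt c (-(Real.cos (k * x) * g x)) x)
    (hs : ∀ x, HasDerivAt s (-(Real.sin (k * x) * g x)) x) (x : ℝ) :
    HasDerivAt (fun y => (Real.cos (k * y) : ℂ) * c y + Real.sin (k * y) * s y)
      (-(k * (Real.sin (k * x) * c x - Real.cos (k * x) * s x)) - g x) x := by
  refine (((hasDerivAt_ofReal_cos_mul k x).mul (hc x)).add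
    ((hasDerivAt_ofReal_sin_mul k x).mul (hs x))).congr_deriv ?_
  have pythagoras : (Real.sin (k * x) : ℂ) ^ 2 + (Real.cos (k * x) : ℂ) ^ 2 = 1 := by
    exact_mod_cast Real.sin_sq_add_cos_sq (k * x)
  linear_combination (-g x) * pythagoras

end VariationOfParameters

/-- The right Jost solution solves the Liouville–Schrödinger equation: if `f` is a bounded
continuous solution of the Volterra equation
`f x = e^{ikx} − ∫_x^∞ (sin(k(x−t))/k) q(t) f(t) dt`,
then `f` is `C²` and `−f'' + q f = k² f`. -/
theorem jost_solution_solves_schrodinger (q : ℝ → ℂ) (hq : Continuous q)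
    (hq' : Integrable (fun x => (1 + |x|) * ‖q x‖)) (k : ℝ) (hk : k ≠ 0)
    (f : ℝ → ℂ) (hf : Continuous f) (hfb : ∃ C : ℝ, ∀ x, ‖f x‖ ≤ C)
    (heq : ∀ x : ℝ, f x = Complex.exp (Complex.I * k * x) -
        ∫ t in Set.Ici x, ((Real.sin (k * (x - t)) / k : ℝ) : ℂ) * q t * f t) :
    ContDiff ℝ 2 f ∧
      ∀ x : ℝ, -(deriv (deriv f) x) + q x * f x = (k : ℂ) ^ 2 * f x := by
  obtain ⟨C, hC⟩ := hfb
  set g : ℝ → ℂ := fun t => q t * f t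
  have hgi : Integrable g := (Integrable.of_one_add_abs_mul_norm hq.aestronglyMeasurable
    hq').mul_bdd hf.aestronglyMeasurable (ae_of_all _ hC)
  set c : ℝ → ℂ := fun x => ∫ t in Set.Ici x, (Real.cos (k * t) : ℂ) * g t
  set s : ℝ → ℂ := fun x => ∫ t in Set.Ici x, (Real.sin (k * t) : ℂ) * g t
  have hc : ∀ x, HasDerivAt c (-(Real.cos (k * x) * g x)) x :=
    hasDerivAt_setIntegral_Ici (hgi.ofReal_cos_mul k) (by fun_prop)
  have hs : ∀ x, HasDerivAt s (-(Real.sin (k * x) * g x)) x :=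
    hasDerivAt_setIntegral_Ici (hgi.ofReal_sin_mul k) (by fun_prop)
  have hf_eq : f = fun x : ℝ => Complex.exp (Complex.I * k * x)
      - (k : ℂ)⁻¹ * (Real.sin (k * x) * c x - Real.cos (k * x) * s x) := by
    ext x
    rw [heq x, ← setIntegral_Ici_sin_mul_sub_div_mul hgi]
    simp only [g, mul_assoc]
  set f₁ : ℝ → ℂ := fun x => Complex.I * k * Complex.exp (Complex.I * k * x)
      - (Real.cos (k * x) * c x + Real.sin (k * x) * s x)
  have hk' : (k : ℂ) ≠ 0 := Complex.ofReal_ne_zero.mpr hk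
  have hf' : ∀ x, HasDerivAt f (f₁ x) x := fun x => by
    rw [hf_eq]
    refine ((hasDerivAt_cexp_I_mul k x).sub
      ((hasDerivAt_sin_mul_sub_cos_mul hc hs x).const_mul _)).congr_deriv ?_
    rw [inv_mul_cancel_left₀ hk']
  have hf'' : ∀ x, HasDerivAt f₁ (-(k : ℂ) ^ 2 * f x + g x) x := fun x => by
    refine (((hasDerivAt_cexp_I_mul k x).const_mul _).sub
      (hasDerivAt_cos_mul_add_sin_mul hc hs x)).congr_deriv ?_
    rw [hf_eq]
    field_simp
    linear_combination (k : ℂ) ^ 2 * Complex.exp (Complex.I * k * x) * Complex.I_sq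
  have hderiv2 : deriv (deriv f) = fun x => -(k : ℂ) ^ 2 * f x + g x := by
    rw [funext fun x => (hf' x).deriv, funext fun x => (hf'' x).deriv]
  refine ⟨contDiff_two_of_hasDerivAt hf' hf'' (by fun_prop), fun x => ?_⟩
  rw [hderiv2]
  ring
end

section
/- Let q : ℝ → ℂ be continuous with ∫_ℝ (1+|x|)|q(x)| dx < ∞, let k be a nonzero real number, and let f : ℝ → ℂ be a bounded continuous function satisfying f(x) = e^{ikx} − ∫_x^∞ (sin(k(x−t))/k) · q(t) · f(t) dt for all x. Then f(x) · e^{−ikx} → 1 as x → +∞. -/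
/-!
Since `|sin (k (x - t)) / k| ≤ 1 / |k|` and `‖f‖ ≤ C`, the integral equation gives
`‖f x e^{-ikx} - 1‖ = ‖f x - e^{ikx}‖ ≤ (C / |k|) ∫_x^∞ ‖q‖`, a tail of an integrable function.
-/

open MeasureTheory Filter

theorem integrable_of_integrable_one_add_abs_mul {μ : Measure ℝ} {g : ℝ → ℝ}
    (h : Integrable (fun x => (1 + |x|) * g x) μ) : Integrable g μ := by
  have hweight : ∀ x : ℝ, ‖(1 + |x|)⁻¹‖ ≤ 1 := fun x => by
    rw [norm_inv, Real.norm_of_nonneg (by positivity)]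
    exact inv_le_one_of_one_le₀ (le_add_of_nonneg_right (abs_nonneg x))
  refine (h.bdd_mul (by fun_prop) (ae_of_all _ hweight)).congr (ae_of_all _ fun x => ?_)
  have : (1 + |x|) ≠ 0 := by positivity
  field_simp

-- Also true for `k = 0`, where both sides are `0` by the convention `x / 0 = 0`.
theorem norm_ofReal_sin_mul_div_le (k y : ℝ) :
    ‖((Real.sin (k * y) / k : ℝ) : ℂ)‖ ≤ |k|⁻¹ := by
  rw [Complex.norm_real, Real.norm_eq_abs, abs_div, div_eq_mul_inv]
  exact mul_le_of_le_one_left (by positivity) (Real.abs_sin_le_one _)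

theorem norm_setIntegral_sin_kernel_mul_le {q f : ℝ → ℂ} {C : ℝ} {s : Set ℝ}
    (hC : ∀ t, ‖f t‖ ≤ C) (hq : IntegrableOn (fun t => ‖q t‖) s) (k x : ℝ) :
    ‖∫ t in s, ((Real.sin (k * (x - t)) / k : ℝ) : ℂ) * q t * f t‖ ≤
      C / |k| * ∫ t in s, ‖q t‖ := by
  rw [← integral_const_mul]
  refine norm_integral_le_of_norm_le (hq.const_mul _) (ae_of_all _ fun t => ?_)
  calc ‖((Real.sin (k * (x - t)) / k : ℝ) : ℂ) * q t * f t‖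
      ≤ |k|⁻¹ * ‖q t‖ * C := by
        rw [norm_mul, norm_mul]
        gcongr
        exacts [norm_ofReal_sin_mul_div_le k (x - t), hC t]
    _ = C / |k| * ‖q t‖ := by ring

theorem norm_mul_inv_sub_one_of_norm_eq_one {𝕜 : Type*} [NormedField 𝕜] {a w : 𝕜}
    (hw : ‖w‖ = 1) : ‖a * w⁻¹ - 1‖ = ‖a - w‖ := by
  have hw0 : w ≠ 0 := norm_ne_zero_iff.mp (hw ▸ one_ne_zero)
  rw [← mul_inv_cancel₀ hw0, ← sub_mul, norm_mul, norm_inv, hw, inv_one, mul_one]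

theorem right_jost_solution_asymptotics_general (q : ℝ → ℂ)
    (hq' : Integrable (fun x => (1 + |x|) * ‖q x‖)) (k : ℝ)
    (f : ℝ → ℂ) (hfb : ∃ C : ℝ, ∀ x, ‖f x‖ ≤ C)
    (heq : ∀ x : ℝ, f x = Complex.exp (Complex.I * k * x) -
        ∫ t in Set.Ici x, ((Real.sin (k * (x - t)) / k : ℝ) : ℂ) * q t * f t) :
    Tendsto (fun x : ℝ => f x * Complex.exp (-(Complex.I * k * x))) atTop (nhds 1) := by
  obtain ⟨C, hC⟩ := hfb
  have hqi : Integrable (fun t => ‖q t‖) := integrable_of_integrable_one_add_abs_mul hq'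
  have hbound : ∀ x : ℝ, ‖f x * Complex.exp (-(Complex.I * k * x)) - 1‖ ≤
      C / |k| * ∫ t in Set.Ici x, ‖q t‖ := fun x => by
    have hunit : ‖Complex.exp (Complex.I * k * x)‖ = 1 := by
      simpa [mul_assoc] using Complex.norm_exp_I_mul_ofReal (k * x)
    rw [Complex.exp_neg, norm_mul_inv_sub_one_of_norm_eq_one hunit, heq x,
      sub_sub_cancel_left, norm_neg]
    exact norm_setIntegral_sin_kernel_mul_le hC hqi.integrableOn k x
  rw [tendsto_iff_norm_sub_tendsto_zero]
  refine squeeze_zero (fun _ => norm_nonneg _) hbound ?_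
  simpa using (tendsto_integral_Ici_zero (f := fun t => ‖q t‖) (μ := volume)
    tendsto_id).const_mul (C / |k|)

/-- Asymptotics of the right Jost solution: if `f` is a bounded continuous solution of
`f x = e^{ikx} − ∫_x^∞ (sin(k(x−t))/k) q(t) f(t) dt`, then `f(x)·e^{−ikx} → 1`
as `x → +∞`. -/
theorem right_jost_solution_asymptotics (q : ℝ → ℂ) (hq : Continuous q)
    (hq' : Integrable (fun x => (1 + |x|) * ‖q x‖)) (k : ℝ) (hk : k ≠ 0)
    (f : ℝ → ℂ) (hf : Continuous f) (hfb : ∃ C : ℝ, ∀ x, ‖f x‖ ≤ C)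
    (heq : ∀ x : ℝ, f x = Complex.exp (Complex.I * k * x) -
        ∫ t in Set.Ici x, ((Real.sin (k * (x - t)) / k : ℝ) : ℂ) * q t * f t) :
    Tendsto (fun x : ℝ => f x * Complex.exp (-(Complex.I * k * x))) atTop (nhds 1) :=
  right_jost_solution_asymptotics_general q hq' k f hfb heq
end

section
/- Let q : ℝ → ℂ be continuous with ∫_ℝ (1+|x|)|q(x)| dx < ∞, let k be a nonzero real number, and let f : ℝ → ℂ be a bounded continuous function satisfying f(x) = e^{ikx} − ∫_x^∞ (sin(k(x−t))/k) · q(t) · f(t) dt for all x. Then |f(x)| ≤ exp( (1/|k|) ∫_ℝ |q(t)| dt ) for every x ∈ ℝ; i.e. the Neumann series bound for the Jost solution holds. -/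
/-!
Since `|sin (k(x - t)) / k| ≤ 1/|k|` and `|e^{ikx}| = 1`, the Volterra equation gives
`|f x| ≤ 1 + ∫_x^∞ p |f|` with `p = |q|/|k|`. A backward Gronwall argument on `[x, ∞)`
then yields `|f x| ≤ exp (∫_x^∞ p) ≤ exp (∫ p)`: with `h y = ∫_y^∞ p |f|` and
`Q y = ∫_y^∞ p`, the function `(1 + h) e^{-Q}` is nondecreasing and tends to `1` at `+∞`.
Boundedness of `f` is what makes `p |f|` integrable.
-/

open MeasureTheory Filter Set Topology

theorem hasDerivAt_integral_Ici {E : Type*} [NormedAddCommGroup E] [NormedSpace ℝ E]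
    [CompleteSpace E] {g : ℝ → E} (hgc : Continuous g) (hgi : Integrable g) (x : ℝ) :
    HasDerivAt (fun y => ∫ t in Ici y, g t) (-g x) x := by
  have htail :
      (fun y => ∫ t in Ici y, g t) = fun y => (∫ t in Ici 0, g t) - ∫ t in 0..y, g t := by
    funext y
    rw [← intervalIntegral.integral_Ici_sub_Ici' hgi.integrableOn hgi.integrableOn,
      sub_sub_cancel]
  rw [htail]
  simpa using ((hgc.integral_hasStrictDerivAt 0 x).hasDerivAt).const_sub (∫ t in Ici 0, g t)

theorem le_mul_exp_integral_Ici_of_le_add_integral_Ici {u p : ℝ → ℝ} {c : ℝ}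
    (hp : Continuous p) (hp0 : ∀ t, 0 ≤ p t) (hpi : Integrable p)
    (hpu : Continuous fun t => p t * u t) (hpui : Integrable fun t => p t * u t)
    (hu : ∀ x, u x ≤ c + ∫ t in Ici x, p t * u t) (x : ℝ) :
    u x ≤ c * Real.exp (∫ t in Ici x, p t) := by
  set h : ℝ → ℝ := fun y => ∫ t in Ici y, p t * u t
  set Q : ℝ → ℝ := fun y => ∫ t in Ici y, p t
  set φ : ℝ → ℝ := fun y => (c + h y) * Real.exp (-Q y)
  have hφ' : ∀ y, HasDerivAt φ (Real.exp (-Q y) * (p y * (c + h y - u y))) y := fun y => by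
    have hQ : HasDerivAt (fun y => -Q y) (p y) y := by
      simpa only [neg_neg] using (hasDerivAt_integral_Ici hp hpi y).fun_neg
    exact (((hasDerivAt_integral_Ici hpu hpui y).const_add c).mul hQ.exp).congr_deriv (by ring)
  have hφ_mono : Monotone φ :=
    monotone_of_deriv_nonneg (fun y => (hφ' y).differentiableAt) fun y => by
      rw [(hφ' y).deriv]
      exact mul_nonneg (Real.exp_pos _).le (mul_nonneg (hp0 y) (sub_nonneg.2 (hu y)))
  have hφ_lim : Tendsto φ atTop (𝓝 c) := by
    have hh : Tendsto h atTop (𝓝 0) := tendsto_integral_Ici_zero tendsto_id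
    have hQ : Tendsto Q atTop (𝓝 0) := tendsto_integral_Ici_zero tendsto_id
    simpa using (hh.const_add c).mul hQ.neg.rexp
  have hφ_le : φ x ≤ c := hφ_mono.ge_of_tendsto hφ_lim x
  calc u x ≤ c + h x := hu x
    _ = φ x * Real.exp (Q x) := by
      simp only [φ, mul_assoc, ← Real.exp_add, neg_add_cancel, Real.exp_zero, mul_one]
    _ ≤ c * Real.exp (Q x) := by gcongr

theorem Integrable.of_integrable_one_add_abs_mul_norm {E : Type*} [NormedAddCommGroup E]
    {q : ℝ → E} (hq : AEStronglyMeasurable q) (h : Integrable fun x => (1 + |x|) * ‖q x‖) :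
    Integrable q :=
  h.mono' hq <| ae_of_all _ fun x =>
    le_mul_of_one_le_left (norm_nonneg _) (le_add_of_nonneg_right (abs_nonneg x))

theorem abs_sin_mul_div_le (k s : ℝ) : |Real.sin (k * s) / k| ≤ 1 / |k| := by
  rw [abs_div]
  gcongr
  exact Real.abs_sin_le_one _

theorem norm_le_one_add_integral_Ici_of_jost_eq {q f : ℝ → ℂ} {k : ℝ}
    (hqf : Integrable fun t => 1 / |k| * ‖q t‖ * ‖f t‖)
    (heq : ∀ x : ℝ, f x = Complex.exp (Complex.I * k * x) -
        ∫ t in Ici x, ((Real.sin (k * (x - t)) / k : ℝ) : ℂ) * q t * f t) (x : ℝ) :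
    ‖f x‖ ≤ 1 + ∫ t in Ici x, 1 / |k| * ‖q t‖ * ‖f t‖ := by
  have hexp : ‖Complex.exp (Complex.I * k * x)‖ = 1 := by
    simp [Complex.norm_exp]
  rw [heq x]
  refine (norm_sub_le _ _).trans ?_
  rw [hexp]
  gcongr
  refine norm_integral_le_of_norm_le hqf.integrableOn (ae_of_all _ fun t => ?_)
  rw [norm_mul, norm_mul, Complex.norm_real, Real.norm_eq_abs]
  gcongr
  exact abs_sin_mul_div_le k (x - t)

theorem jost_solution_neumann_bound_general (q : ℝ → ℂ) (hq : Continuous q)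
    (hq' : Integrable (fun x => (1 + |x|) * ‖q x‖)) (k : ℝ)
    (f : ℝ → ℂ) (hf : Continuous f) (hfb : ∃ C : ℝ, ∀ x, ‖f x‖ ≤ C)
    (heq : ∀ x : ℝ, f x = Complex.exp (Complex.I * k * x) -
        ∫ t in Set.Ici x, ((Real.sin (k * (x - t)) / k : ℝ) : ℂ) * q t * f t) :
    ∀ x : ℝ, ‖f x‖ ≤ Real.exp ((1 / |k|) * ∫ t : ℝ, ‖q t‖) := by
  intro x
  obtain ⟨C, hC⟩ := hfb
  set p : ℝ → ℝ := fun t => 1 / |k| * ‖q t‖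
  have hpi : Integrable p :=
    (Integrable.of_integrable_one_add_abs_mul_norm hq.aestronglyMeasurable hq').norm.const_mul _
  have hpfi : Integrable fun t => p t * ‖f t‖ :=
    hpi.mul_bdd hf.norm.aestronglyMeasurable (ae_of_all _ fun t => by simpa using hC t)
  calc ‖f x‖ ≤ 1 * Real.exp (∫ t in Ici x, p t) :=
        le_mul_exp_integral_Ici_of_le_add_integral_Ici (by fun_prop) (fun t => by positivity) hpi
          (by fun_prop) hpfi (norm_le_one_add_integral_Ici_of_jost_eq hpfi heq) x
    _ ≤ Real.exp (∫ t, p t) := by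
        rw [one_mul]
        exact Real.exp_le_exp.mpr (setIntegral_le_integral hpi (ae_of_all _ fun t => by positivity))
    _ = Real.exp ((1 / |k|) * ∫ t : ℝ, ‖q t‖) := by rw [integral_const_mul]

/-- Neumann-series bound for the right Jost solution: if `f` is a bounded continuous
solution of `f x = e^{ikx} − ∫_x^∞ (sin(k(x−t))/k) q(t) f(t) dt`, then
`|f(x)| ≤ exp((1/|k|) ∫ |q|)` for every `x`. -/
theorem jost_solution_neumann_bound (q : ℝ → ℂ) (hq : Continuous q)
    (hq' : Integrable (fun x => (1 + |x|) * ‖q x‖)) (k : ℝ) (hk : k ≠ 0)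
    (f : ℝ → ℂ) (hf : Continuous f) (hfb : ∃ C : ℝ, ∀ x, ‖f x‖ ≤ C)
    (heq : ∀ x : ℝ, f x = Complex.exp (Complex.I * k * x) -
        ∫ t in Set.Ici x, ((Real.sin (k * (x - t)) / k : ℝ) : ℂ) * q t * f t) :
    ∀ x : ℝ, ‖f x‖ ≤ Real.exp ((1 / |k|) * ∫ t : ℝ, ‖q t‖) :=
  jost_solution_neumann_bound_general q hq hq' k f hf hfb heq
end

section
/- (Theorem 2, first relation.) Let q : ℝ → ℂ be continuous with ∫_ℝ (1+|x|)|q(x)| dx < ∞ and let k be a nonzero real number. Let f₊(k,·), f₊(−k,·) be the right Jost solutions for k and −k, and let f₋(k,·) be the left Jost solution for k. Then there exists a unique pair of complex constants (c₁, c₂) such that f₋(k,x) = c₁ · f₊(k,x) + c₂ · f₊(−k,x) for all x ∈ ℝ. (These constants are the scattering coefficients: the relation s₂₂ f₋ = s₂₁ f₊ + f₊(−k,·) after normalization.) -/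
/-!
Splitting `∫_{-∞}^x = ∫_ℝ - ∫_x^∞` in the left Volterra equation and expanding
`sin (k (x - t)) / k` into `e^{± ik(x - t)}` shows that `f₋` solves the right Volterra equation
with free term `α e^{ikx} + β e^{-ikx}`. So does `α f₊(k) + β f₊(-k)`, and the difference `h`
solves the homogeneous right equation, so `g = |h|` satisfies `g x ≤ ∫_x^∞ w g` with
`w = |q| / |k|`. Such a bounded `g` vanishes on `[a, ∞)` as soon as, there, it is supported in a
set of `w`-mass at most `1/2` (its supremum on `[a, ∞)` is then at most half of itself); this
applies first to a far tail and then propagates leftwards in steps of uniformly small `w`-mass.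
For uniqueness, the Volterra terms tend to `0` at `+∞`, so `f₊(±k)` is asymptotic to `e^{± ikx}`,
and no nontrivial combination of these two tends to `0`.
-/

open MeasureTheory Filter Set Topology BoundedContinuousFunction

theorem integrable_of_integrable_one_add_abs_mul_norm {E : Type*} [NormedAddCommGroup E]
    {q : ℝ → E} (hq : AEStronglyMeasurable q) (hq' : Integrable fun x => (1 + |x|) * ‖q x‖) :
    Integrable q :=
  hq'.mono' hq (ae_of_all _ fun x =>
    le_mul_of_one_le_left (norm_nonneg _) (le_add_of_nonneg_right (abs_nonneg x)))

theorem BoundedContinuousFunction.exists_coe_eq {α β : Type*} [TopologicalSpace α]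
    [SeminormedAddCommGroup β] {f : α → β} (hf : Continuous f) (hfb : ∃ C, ∀ x, ‖f x‖ ≤ C) :
    ∃ F : α →ᵇ β, ⇑F = f :=
  let ⟨C, hC⟩ := hfb
  ⟨.ofNormedAddCommGroup f hf C hC, rfl⟩

section Gronwall

variable {w g : ℝ → ℝ}

theorem exists_pos_forall_setIntegral_Ico_lt (hw : Integrable w) {ε : ℝ} (hε : 0 < ε) :
    ∃ δ > 0, ∀ a, ∫ t in Ico a (a + δ), w t < ε := by
  have hvol : Tendsto (fun p : ℝ × ℝ => volume (Ico p.1 (p.1 + p.2))) (⊤ ×ˢ 𝓝[>] 0) (𝓝 0) := by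
    have : Tendsto (fun p : ℝ × ℝ => p.2) (⊤ ×ˢ 𝓝[>] 0) (𝓝 0) :=
      tendsto_snd.mono_right nhdsWithin_le_nhds
    simpa using ENNReal.tendsto_ofReal this
  obtain ⟨_, hall, _, hp, hδ⟩ :=
    eventually_prod_iff.1 ((hw.tendsto_setIntegral_nhds_zero hvol).eventually (gt_mem_nhds hε))
  obtain ⟨δ, hpδ, hδ0⟩ := (hp.and self_mem_nhdsWithin).exists
  exact ⟨δ, hδ0, fun a => hδ (eventually_top.1 hall a) hpδ⟩

variable {M : ℝ}

theorem forall_ge_eq_zero_of_le_setIntegral_Ici (hw : Integrable w) (hw0 : 0 ≤ w)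
    (hg : AEStronglyMeasurable g) (hg0 : 0 ≤ g) (hgM : ∀ t, g t ≤ M)
    (hgw : ∀ x, g x ≤ ∫ t in Ici x, w t * g t) {a : ℝ} {A : Set ℝ} (hA : MeasurableSet A)
    (hgA : ∀ t, a ≤ t → t ∉ A → g t = 0) (hwA : ∫ t in A, w t ≤ 1 / 2) :
    ∀ x, a ≤ x → g x = 0 := by
  have hbdd : BddAbove (g '' Ici a) := ⟨M, by rintro _ ⟨t, -, rfl⟩; exact hgM t⟩
  set S := sSup (g '' Ici a)
  have hle : ∀ t, a ≤ t → g t ≤ S := fun t ht => le_csSup hbdd (mem_image_of_mem g ht)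
  have hS : 0 ≤ S := (hg0 a).trans (hle a le_rfl)
  have hwg : Integrable (fun t => w t * g t) :=
    hw.mul_bdd hg (ae_of_all _ fun t => by simpa [abs_of_nonneg (hg0 t)] using hgM t)
  have hwS : Integrable (A.indicator fun t => S * w t) := (hw.const_mul S).indicator hA
  have half : ∀ x, a ≤ x → g x ≤ S / 2 := fun x hx =>
    calc g x ≤ ∫ t in Ici x, w t * g t := hgw x
      _ ≤ ∫ t in Ici x, A.indicator (fun t => S * w t) t := by
        refine setIntegral_mono_on hwg.integrableOn hwS.integrableOn measurableSet_Ici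
          fun t ht => ?_
        by_cases htA : t ∈ A
        · rw [indicator_of_mem htA, mul_comm]
          exact mul_le_mul_of_nonneg_right (hle t (hx.trans ht)) (hw0 t)
        · rw [indicator_of_notMem htA, hgA t (hx.trans ht) htA, mul_zero]
      _ ≤ ∫ t, A.indicator (fun t => S * w t) t :=
        setIntegral_le_integral hwS (ae_of_all _ fun t =>
          indicator_nonneg (fun t _ => mul_nonneg hS (hw0 t)) t)
      _ = S * ∫ t in A, w t := by rw [integral_indicator hA, integral_const_mul]
      _ ≤ S / 2 := by nlinarith
  have hS0 : S ≤ 0 := by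
    have : S ≤ S / 2 := csSup_le (nonempty_Ici.image g) (by rintro _ ⟨t, ht, rfl⟩; exact half t ht)
    linarith
  exact fun x hx => le_antisymm ((hle x hx).trans hS0) (hg0 x)

theorem eq_zero_of_le_setIntegral_Ici (hw : Integrable w) (hw0 : 0 ≤ w)
    (hg : AEStronglyMeasurable g) (hg0 : 0 ≤ g) (hgM : ∀ t, g t ≤ M)
    (hgw : ∀ x, g x ≤ ∫ t in Ici x, w t * g t) : g = 0 := by
  obtain ⟨x₀, hx₀⟩ : ∃ x₀, ∫ t in Ici x₀, w t ≤ 1 / 2 := by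
    have := tendsto_integral_Ioi_zero (f := w) (μ := volume) tendsto_id
    obtain ⟨x₀, hx₀⟩ := (this.eventually (ge_mem_nhds (by norm_num : (0 : ℝ) < 1 / 2))).exists
    exact ⟨x₀, by rwa [integral_Ici_eq_integral_Ioi]⟩
  obtain ⟨δ, hδ, hδw⟩ := exists_pos_forall_setIntegral_Ico_lt hw (by norm_num : (0 : ℝ) < 1 / 2)
  have step : ∀ n : ℕ, ∀ x, x₀ - n * δ ≤ x → g x = 0 := by
    intro n
    induction n with
    | zero =>
      simpa using forall_ge_eq_zero_of_le_setIntegral_Ici hw hw0 hg hg0 hgM hgw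
        measurableSet_Ici (fun t ht htA => absurd ht htA) hx₀
    | succ n ih =>
      refine forall_ge_eq_zero_of_le_setIntegral_Ici hw hw0 hg hg0 hgM hgw measurableSet_Ico
        (fun t ht htA => ih t ?_) (hδw (x₀ - (n + 1 : ℕ) * δ)).le
      simp only [mem_Ico, not_and, not_lt] at htA
      push_cast at ht htA ⊢
      linarith [htA ht]
  funext x
  obtain ⟨n, hn⟩ := exists_nat_ge ((x₀ - x) / δ)
  exact step n x (by rw [div_le_iff₀ hδ] at hn; linarith)

end Gronwall

theorem eq_zero_of_tendsto_mul_of_norm_eq_one {α : Type*} {l : Filter α} [l.NeBot] {d : ℂ}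
    {u : α → ℂ} (hu : ∀ x, ‖u x‖ = 1) (h : Tendsto (fun x => d * u x) l (𝓝 0)) : d = 0 := by
  rw [tendsto_zero_iff_norm_tendsto_zero] at h
  simp only [norm_mul, hu, mul_one] at h
  exact norm_eq_zero.1 (tendsto_nhds_unique tendsto_const_nhds h)

open Complex

theorem norm_exp_I_mul (k x : ℝ) : ‖exp (I * k * x)‖ = 1 := by
  simp [norm_exp]

theorem norm_exp_neg_I_mul (k x : ℝ) : ‖exp (-(I * k * x))‖ = 1 := by
  simp [norm_exp]

theorem eq_zero_of_tendsto_exp_combination {k : ℝ} (hk : k ≠ 0) {d₁ d₂ : ℂ}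
    (h : Tendsto (fun x : ℝ => d₁ * exp (I * k * x) + d₂ * exp (-(I * k * x))) atTop (𝓝 0)) :
    d₁ = 0 ∧ d₂ = 0 := by
  set c : ℝ := Real.pi / (2 * k)
  have hquarter : exp (I * k * c) = I := by
    have hk' : (k : ℂ) ≠ 0 := by exact_mod_cast hk
    have : I * k * c = Real.pi / 2 * I := by
      simp only [c]
      push_cast
      field_simp
    rw [this, exp_pi_div_two_mul_I]
  -- shifting by a quarter period multiplies `exp (± I k x)` by `± I`
  have hshift : Tendsto (fun x : ℝ => d₂ * exp (-(I * k * x)) - d₁ * exp (I * k * x)) atTop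
      (𝓝 0) := by
    have := (h.comp (tendsto_atTop_add_const_right _ c tendsto_id)).const_mul I
    rw [mul_zero] at this
    refine this.congr fun x => ?_
    simp only [Function.comp, id, ofReal_add, mul_add, neg_add, exp_add, exp_neg (I * k * c),
      hquarter, inv_I]
    linear_combination (d₁ * exp (I * k * x) - d₂ * exp (-(I * k * x))) * I_sq
  have h₁ : 2 * d₁ = 0 := eq_zero_of_tendsto_mul_of_norm_eq_one (norm_exp_I_mul k) <| by
    simpa using (h.sub hshift).congr fun x : ℝ =>
      (by ring : _ = 2 * d₁ * exp (I * k * (x : ℂ)))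
  have h₂ : 2 * d₂ = 0 := eq_zero_of_tendsto_mul_of_norm_eq_one (norm_exp_neg_I_mul k) <| by
    simpa using (h.add hshift).congr fun x : ℝ =>
      (by ring : _ = 2 * d₂ * exp (-(I * k * (x : ℂ))))
  exact ⟨by simpa using h₁, by simpa using h₂⟩

theorem norm_ofReal_sin_div_le (u k : ℝ) : ‖((Real.sin u / k : ℝ) : ℂ)‖ ≤ |k|⁻¹ := by
  rw [norm_real, Real.norm_eq_abs, abs_div, div_eq_mul_inv]
  exact mul_le_of_le_one_left (inv_nonneg.2 (abs_nonneg k)) (Real.abs_sin_le_one u)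

theorem ofReal_sin_mul_sub_div_eq (k x t : ℝ) :
    ((Real.sin (k * (x - t)) / k : ℝ) : ℂ) =
      (exp (I * k * x) * exp (-(I * k * t)) - exp (-(I * k * x)) * exp (I * k * t)) /
        (2 * I * k) := by
  rcases eq_or_ne k 0 with rfl | hk
  · simp
  have hk' : (k : ℂ) ≠ 0 := by exact_mod_cast hk
  rw [← exp_add, ← exp_add]
  push_cast
  rw [Complex.sin]
  field_simp
  ring_nf
  rw [I_sq]
  ring_nf

/-- `f₊(k, x) = e^{ikx} - jostTailIntegral k q f₊ x` is the right Jost equation. -/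
noncomputable def jostTailIntegral (k : ℝ) (q f : ℝ → ℂ) (x : ℝ) : ℂ :=
  ∫ t in Ici x, ((Real.sin (k * (x - t)) / k : ℝ) : ℂ) * q t * f t

theorem jostTailIntegral_neg (k : ℝ) (q f : ℝ → ℂ) :
    jostTailIntegral (-k) q f = jostTailIntegral k q f := by
  funext x
  simp only [jostTailIntegral, neg_mul, Real.sin_neg, neg_div_neg_eq]

section BoundedSolutions

variable {k : ℝ} {q : ℝ → ℂ}

theorem integrable_sin_mul_mul (hq : Integrable q) (f : ℝ →ᵇ ℂ) (x : ℝ) :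
    Integrable (fun t => ((Real.sin (k * (x - t)) / k : ℝ) : ℂ) * q t * f t) :=
  (hq.bdd_mul (by fun_prop) (ae_of_all _ fun t => norm_ofReal_sin_div_le _ k)).mul_bdd
    f.continuous.aestronglyMeasurable (ae_of_all _ f.norm_coe_le_norm)

theorem norm_jostTailIntegral_le (hq : Integrable q) (f : ℝ →ᵇ ℂ) (x : ℝ) :
    ‖jostTailIntegral k q f x‖ ≤ ∫ t in Ici x, |k|⁻¹ * ‖q t‖ * ‖f t‖ := by
  refine norm_integral_le_of_norm_le ((hq.norm.const_mul _).mul_bdd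
    f.continuous.norm.aestronglyMeasurable (c := ‖f‖) (ae_of_all _ fun t => ?_)).integrableOn
    (ae_of_all _ fun t => ?_)
  · simpa using f.norm_coe_le_norm t
  · rw [norm_mul, norm_mul]
    gcongr
    exact norm_ofReal_sin_div_le _ k

theorem jostTailIntegral_add (hq : Integrable q) (f g : ℝ →ᵇ ℂ) (x : ℝ) :
    jostTailIntegral k q ⇑(f + g) x = jostTailIntegral k q f x + jostTailIntegral k q g x := by
  rw [jostTailIntegral, jostTailIntegral, jostTailIntegral, ← integral_add
    (integrable_sin_mul_mul hq f x).integrableOn (integrable_sin_mul_mul hq g x).integrableOn]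
  exact integral_congr_ae (ae_of_all _ fun t => by simp only [coe_add, Pi.add_apply]; ring)

theorem jostTailIntegral_sub (hq : Integrable q) (f g : ℝ →ᵇ ℂ) (x : ℝ) :
    jostTailIntegral k q ⇑(f - g) x = jostTailIntegral k q f x - jostTailIntegral k q g x := by
  rw [jostTailIntegral, jostTailIntegral, jostTailIntegral, ← integral_sub
    (integrable_sin_mul_mul hq f x).integrableOn (integrable_sin_mul_mul hq g x).integrableOn]
  exact integral_congr_ae (ae_of_all _ fun t => by simp only [coe_sub, Pi.sub_apply]; ring)

theorem jostTailIntegral_smul (c : ℂ) (f : ℝ →ᵇ ℂ) (x : ℝ) :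
    jostTailIntegral k q ⇑(c • f) x = c * jostTailIntegral k q f x := by
  simp only [jostTailIntegral, BoundedContinuousFunction.coe_smul, smul_eq_mul,
    ← integral_const_mul]
  exact integral_congr_ae (ae_of_all _ fun t => by ring)

theorem tendsto_jostTailIntegral_atTop (hq : Integrable q) (f : ℝ →ᵇ ℂ) :
    Tendsto (jostTailIntegral k q f) atTop (𝓝 0) := by
  refine squeeze_zero_norm (norm_jostTailIntegral_le hq f) ?_
  simpa only [integral_Ici_eq_integral_Ioi, id] using tendsto_integral_Ioi_zero tendsto_id

theorem eq_zero_of_forall_eq_neg_jostTailIntegral (hq : Integrable q) (h : ℝ →ᵇ ℂ)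
    (hh : ∀ x, h x = -jostTailIntegral k q h x) : h = 0 := by
  have hnorm : (fun t => ‖h t‖) = 0 :=
    eq_zero_of_le_setIntegral_Ici (w := fun t => |k|⁻¹ * ‖q t‖) (hq.norm.const_mul _)
      (fun t => by positivity) h.continuous.norm.aestronglyMeasurable (fun t => norm_nonneg _)
      h.norm_coe_le_norm fun x => by rw [hh x, norm_neg]; exact norm_jostTailIntegral_le hq h x
  ext x
  simpa using congr_fun hnorm x

theorem exists_integral_sin_mul_eq (hq : Integrable q) (f : ℝ →ᵇ ℂ) :
    ∃ α β : ℂ, ∀ x : ℝ, ∫ t, ((Real.sin (k * (x - t)) / k : ℝ) : ℂ) * q t * f t =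
      α * exp (I * k * x) + β * exp (-(I * k * x)) := by
  have hqf : Integrable (fun t => q t * f t) :=
    hq.mul_bdd f.continuous.aestronglyMeasurable (ae_of_all _ f.norm_coe_le_norm)
  have hplus : Integrable (fun t : ℝ => exp (I * k * t) * (q t * f t)) :=
    hqf.bdd_mul (by fun_prop) (ae_of_all _ fun t => (norm_exp_I_mul k t).le)
  have hminus : Integrable (fun t : ℝ => exp (-(I * k * t)) * (q t * f t)) :=
    hqf.bdd_mul (by fun_prop) (ae_of_all _ fun t => (norm_exp_neg_I_mul k t).le)
  refine ⟨(2 * I * k)⁻¹ * ∫ t : ℝ, exp (-(I * k * t)) * (q t * f t),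
    -((2 * I * k)⁻¹ * ∫ t : ℝ, exp (I * k * t) * (q t * f t)), fun x => ?_⟩
  calc ∫ t, ((Real.sin (k * (x - t)) / k : ℝ) : ℂ) * q t * f t
      = ∫ t : ℝ, exp (I * k * x) / (2 * I * k) *
            (exp (-(I * k * t)) * (q t * f t)) -
          exp (-(I * k * x)) / (2 * I * k) *
            (exp (I * k * t) * (q t * f t)) :=
        integral_congr_ae (ae_of_all _ fun t => by simp only [ofReal_sin_mul_sub_div_eq]; ring)
    _ = _ := by
        rw [integral_sub (hminus.const_mul _) (hplus.const_mul _), integral_const_mul,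
          integral_const_mul]
        ring

theorem exists_eq_exp_combination_sub_jostTailIntegral (hq : Integrable q) (f : ℝ →ᵇ ℂ)
    (hf : ∀ x : ℝ, f x = exp (-(I * k * x)) +
      ∫ t in Iic x, ((Real.sin (k * (x - t)) / k : ℝ) : ℂ) * q t * f t) :
    ∃ α β : ℂ, ∀ x : ℝ, f x = α * exp (I * k * x) +
      β * exp (-(I * k * x)) - jostTailIntegral k q f x := by
  obtain ⟨α, β, hαβ⟩ := exists_integral_sin_mul_eq (k := k) hq f
  refine ⟨α, β + 1, fun x => ?_⟩
  have hsplit := intervalIntegral.integral_Iic_add_Ioi (b := x)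
    (integrable_sin_mul_mul (k := k) hq f x).integrableOn
    (integrable_sin_mul_mul (k := k) hq f x).integrableOn
  rw [hf x, jostTailIntegral, integral_Ici_eq_integral_Ioi]
  linear_combination hsplit + hαβ x

theorem eq_smul_add_smul_of_eq_sub_jostTailIntegral (hq : Integrable q) {F G H : ℝ →ᵇ ℂ}
    (hF : ∀ x : ℝ, F x = exp (I * k * x) - jostTailIntegral k q F x)
    (hG : ∀ x : ℝ, G x = exp (-(I * k * x)) - jostTailIntegral k q G x)
    {α β : ℂ} (hH : ∀ x : ℝ, H x = α * exp (I * k * x) +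
      β * exp (-(I * k * x)) - jostTailIntegral k q H x) :
    H = α • F + β • G := by
  rw [← sub_eq_zero]
  refine eq_zero_of_forall_eq_neg_jostTailIntegral (k := k) hq _ fun x => ?_
  rw [jostTailIntegral_sub hq, jostTailIntegral_add hq, jostTailIntegral_smul,
    jostTailIntegral_smul]
  simp only [coe_sub, coe_add, BoundedContinuousFunction.coe_smul, Pi.sub_apply, Pi.add_apply,
    smul_eq_mul]
  linear_combination hH x - α * hF x - β * hG x

theorem eq_zero_of_forall_mul_add_mul_eq_zero (hk : k ≠ 0) (hq : Integrable q) {F G : ℝ →ᵇ ℂ}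
    (hF : ∀ x : ℝ, F x = exp (I * k * x) - jostTailIntegral k q F x)
    (hG : ∀ x : ℝ, G x = exp (-(I * k * x)) - jostTailIntegral k q G x)
    {d₁ d₂ : ℂ} (h : ∀ x, d₁ * F x + d₂ * G x = 0) : d₁ = 0 ∧ d₂ = 0 := by
  refine eq_zero_of_tendsto_exp_combination hk ?_
  have := ((tendsto_jostTailIntegral_atTop (k := k) hq F).const_mul d₁).add
    ((tendsto_jostTailIntegral_atTop (k := k) hq G).const_mul d₂)
  rw [mul_zero, mul_zero, add_zero] at this
  exact this.congr fun x => by linear_combination d₁ * hF x + d₂ * hG x - h x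

end BoundedSolutions

/-- Theorem 2, first relation: the left Jost solution `f₋(k,·)` is a unique linear
combination of the right Jost solutions `f₊(k,·)` and `f₊(−k,·)`; the coefficients are
the scattering coefficients in the relation `s₂₂ f₋ = s₂₁ f₊ + f₊(−k,·)`. -/
theorem left_jost_combination_of_right (q : ℝ → ℂ) (hq : Continuous q)
    (hq' : Integrable (fun x => (1 + |x|) * ‖q x‖)) (k : ℝ) (hk : k ≠ 0)
    (fpk fpmk fmk : ℝ → ℂ)
    (hfpk : Continuous fpk) (hfpkb : ∃ C : ℝ, ∀ x, ‖fpk x‖ ≤ C)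
    (hfpkeq : ∀ x : ℝ, fpk x = Complex.exp (Complex.I * k * x) -
        ∫ t in Set.Ici x, ((Real.sin (k * (x - t)) / k : ℝ) : ℂ) * q t * fpk t)
    (hfpmk : Continuous fpmk) (hfpmkb : ∃ C : ℝ, ∀ x, ‖fpmk x‖ ≤ C)
    (hfpmkeq : ∀ x : ℝ, fpmk x = Complex.exp (Complex.I * (-k) * x) -
        ∫ t in Set.Ici x, ((Real.sin ((-k) * (x - t)) / (-k) : ℝ) : ℂ) * q t * fpmk t)
    (hfmk : Continuous fmk) (hfmkb : ∃ C : ℝ, ∀ x, ‖fmk x‖ ≤ C)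
    (hfmkeq : ∀ x : ℝ, fmk x = Complex.exp (-(Complex.I * k * x)) +
        ∫ t in Set.Iic x, ((Real.sin (k * (x - t)) / k : ℝ) : ℂ) * q t * fmk t) :
    ∃! c : ℂ × ℂ, ∀ x : ℝ, fmk x = c.1 * fpk x + c.2 * fpmk x := by
  have hqi : Integrable q :=
    integrable_of_integrable_one_add_abs_mul_norm hq.aestronglyMeasurable hq'
  obtain ⟨F, rfl⟩ := BoundedContinuousFunction.exists_coe_eq hfpk hfpkb
  obtain ⟨G, rfl⟩ := BoundedContinuousFunction.exists_coe_eq hfpmk hfpmkb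
  obtain ⟨H, rfl⟩ := BoundedContinuousFunction.exists_coe_eq hfmk hfmkb
  have hG : ∀ x : ℝ, G x = exp (-(I * k * x)) - jostTailIntegral k q G x := by
    intro x
    rw [hfpmkeq x, ← jostTailIntegral_neg]
    congr 2
    ring
  obtain ⟨α, β, hH⟩ := exists_eq_exp_combination_sub_jostTailIntegral hqi H hfmkeq
  have hrep : ∀ x, H x = α * F x + β * G x := fun x => by
    simp [eq_smul_add_smul_of_eq_sub_jostTailIntegral hqi hfpkeq hG hH]
  refine ⟨(α, β), hrep, ?_⟩
  rintro ⟨a, b⟩ hab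
  obtain ⟨h₁, h₂⟩ := eq_zero_of_forall_mul_add_mul_eq_zero hk hqi hfpkeq hG
    (d₁ := a - α) (d₂ := b - β) fun x => by
      linear_combination hrep x - hab x
  simp only [Prod.mk.injEq]
  exact ⟨sub_eq_zero.1 h₁, sub_eq_zero.1 h₂⟩
end

section
/- (Unitarity of the scattering coefficients.) Let q : ℝ → ℂ be continuous, real-valued (q(x) ∈ ℝ for all x), with ∫_ℝ (1+|x|)|q(x)| dx < ∞, and let k be a nonzero real number. Let (c₁, c₂) be the unique complex constants with f₋(k,x) = c₁ f₊(k,x) + c₂ f₊(−k,x) for all x. Then |c₂|² − |c₁|² = 1. -/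
open MeasureTheory Filter Set Topology ComplexConjugate

/-!
For real `q` the Wronskian `W = f f̄' - f' f̄` of `f = f₋(k,·)` with its complex conjugate is
constant, because `f` and `f̄` solve the same equation `f'' = (q - k²) f`. Each Jost solution is a
plane wave plus a Volterra tail `∫ₓ^∞ sin(k(x-t))/k · q f` which, together with its derivative
`∫ₓ^∞ cos(k(x-t)) · q f`, vanishes at the relevant infinity; the left solution is reduced to a
right one by the reflection `x ↦ -x`. Hence `W` tends to `2ik` at `-∞`, where `f ~ e^{-ikx}`, and
to `2ik (|c₂|² - |c₁|²)` at `+∞`, where `f ~ c₁ e^{ikx} + c₂ e^{-ikx}`.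
-/

namespace JostSolution

noncomputable def planeWave (κ x : ℝ) : ℂ := Complex.exp (Complex.I * κ * x)

theorem planeWave_neg (κ x : ℝ) : planeWave (-κ) x = planeWave κ (-x) := by
  simp only [planeWave, Complex.ofReal_neg, mul_neg, neg_mul]

theorem conj_planeWave (κ x : ℝ) : conj (planeWave κ x) = planeWave (-κ) x := by
  simp only [planeWave, ← Complex.exp_conj, map_mul, Complex.conj_I, Complex.conj_ofReal,
    Complex.ofReal_neg, mul_neg, neg_mul]

theorem planeWave_mul_planeWave_neg (κ x : ℝ) : planeWave κ x * planeWave (-κ) x = 1 := by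
  rw [planeWave, planeWave, ← Complex.exp_add, Complex.ofReal_neg]
  simp

theorem norm_planeWave (κ x : ℝ) : ‖planeWave κ x‖ = 1 := by
  rw [planeWave, Complex.norm_exp]
  simp

theorem hasDerivAt_planeWave (κ x : ℝ) :
    HasDerivAt (planeWave κ) (Complex.I * κ * planeWave κ x) x := by
  have h := (((hasDerivAt_id (x : ℂ)).const_mul (Complex.I * κ)).cexp).comp_ofReal
  simp only [id, mul_one] at h
  unfold planeWave
  convert h using 1
  ring

section SetIntegralIci

variable {E : Type*} [NormedAddCommGroup E] [NormedSpace ℝ E]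

theorem tendsto_setIntegral_Ici_atTop {g : ℝ → E} (hg : Integrable g) :
    Tendsto (fun x => ∫ t in Ici x, g t) atTop (𝓝 0) := by
  have h := tendsto_setIntegral_of_antitone (μ := volume) (s := Ici) (fun _ => measurableSet_Ici)
    (fun _ _ hab => Ici_subset_Ici.2 hab) ⟨0, hg.integrableOn⟩
  have hempty : ⋂ x : ℝ, Ici x = ∅ :=
    eq_empty_of_forall_notMem fun y hy => by
      have := mem_iInter.1 hy (y + 1)
      norm_num at this
  simpa [hempty] using h

theorem hasDerivAt_setIntegral_Ici [CompleteSpace E] {g : ℝ → E} (hg : Continuous g)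
    (hgi : Integrable g) (x : ℝ) : HasDerivAt (fun y => ∫ t in Ici y, g t) (-g x) x := by
  have h : (fun y => ∫ t in Ici y, g t) =
      fun y => (∫ t in Ici 0, g t) - ∫ t in (0 : ℝ)..y, g t := by
    funext y
    rw [← intervalIntegral.integral_Ici_sub_Ici' hgi.integrableOn hgi.integrableOn, sub_sub_cancel]
  rw [h]
  exact (intervalIntegral.integral_hasDerivAt_right hgi.intervalIntegrable
    (hg.stronglyMeasurableAtFilter _ _) hg.continuousAt).const_sub _

end SetIntegralIci

theorem tendsto_setIntegral_Ici_mul_atTop {a : ℝ → ℝ → ℂ} {u : ℝ → ℂ} {C : ℝ}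
    (ha : ∀ x t, ‖a x t‖ ≤ C) (hu : Integrable u) :
    Tendsto (fun x => ∫ t in Ici x, a x t * u t) atTop (𝓝 0) := by
  have hbound : ∀ x, ‖∫ t in Ici x, a x t * u t‖ ≤ ∫ t in Ici x, C * ‖u t‖ := fun x =>
    norm_integral_le_of_norm_le (hu.norm.const_mul C).integrableOn
      (ae_of_all _ fun t => by
        rw [norm_mul]; exact mul_le_mul_of_nonneg_right (ha x t) (norm_nonneg _))
  exact squeeze_zero_norm hbound (tendsto_setIntegral_Ici_atTop (hu.norm.const_mul C))

noncomputable def sinTail (κ : ℝ) (u : ℝ → ℂ) (x : ℝ) : ℂ :=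
  ∫ t in Ici x, ((Real.sin (κ * (x - t)) / κ : ℝ) : ℂ) * u t

noncomputable def cosTail (κ : ℝ) (u : ℝ → ℂ) (x : ℝ) : ℂ :=
  ∫ t in Ici x, (Real.cos (κ * (x - t)) : ℂ) * u t

section Volterra

variable {κ : ℝ} {u : ℝ → ℂ}

theorem integrable_ofReal_mul {a : ℝ → ℝ} (ha : Continuous a) (ha1 : ∀ t, |a t| ≤ 1)
    (hu : Integrable u) : Integrable fun t => (a t : ℂ) * u t :=
  hu.bdd_mul (Complex.continuous_ofReal.comp ha).aestronglyMeasurable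
    (ae_of_all _ fun t => by simpa using ha1 t)

theorem sinTail_eq (hu : Integrable u) (x : ℝ) :
    sinTail κ u x = ((Real.sin (κ * x) / κ : ℝ) : ℂ) * (∫ t in Ici x, (Real.cos (κ * t) : ℂ) * u t)
      - ((Real.cos (κ * x) / κ : ℝ) : ℂ) * (∫ t in Ici x, (Real.sin (κ * t) : ℂ) * u t) := by
  have hcos := integrable_ofReal_mul (by fun_prop) (fun t => Real.abs_cos_le_one (κ * t)) hu
  have hsin := integrable_ofReal_mul (by fun_prop) (fun t => Real.abs_sin_le_one (κ * t)) hu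
  rw [← integral_const_mul, ← integral_const_mul,
    ← integral_sub (hcos.const_mul _).integrableOn (hsin.const_mul _).integrableOn]
  refine setIntegral_congr_fun measurableSet_Ici fun t _ => ?_
  simp only [mul_sub, Real.sin_sub]
  push_cast
  ring

theorem cosTail_eq (hu : Integrable u) (x : ℝ) :
    cosTail κ u x = (Real.cos (κ * x) : ℂ) * (∫ t in Ici x, (Real.cos (κ * t) : ℂ) * u t)
      + (Real.sin (κ * x) : ℂ) * (∫ t in Ici x, (Real.sin (κ * t) : ℂ) * u t) := by
  have hcos := integrable_ofReal_mul (by fun_prop) (fun t => Real.abs_cos_le_one (κ * t)) hu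
  have hsin := integrable_ofReal_mul (by fun_prop) (fun t => Real.abs_sin_le_one (κ * t)) hu
  rw [← integral_const_mul, ← integral_const_mul,
    ← integral_add (hcos.const_mul _).integrableOn (hsin.const_mul _).integrableOn]
  refine setIntegral_congr_fun measurableSet_Ici fun t _ => ?_
  simp only [mul_sub, Real.cos_sub]
  push_cast
  ring

theorem hasDerivAt_ofReal_sin_mul (κ x : ℝ) :
    HasDerivAt (fun y => (Real.sin (κ * y) : ℂ)) (κ * Real.cos (κ * x) : ℝ) x := by
  simpa [mul_comm] using (((hasDerivAt_id x).const_mul κ).sin).ofReal_comp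

theorem hasDerivAt_ofReal_cos_mul (κ x : ℝ) :
    HasDerivAt (fun y => (Real.cos (κ * y) : ℂ)) (-(κ * Real.sin (κ * x)) : ℝ) x := by
  simpa [mul_comm] using (((hasDerivAt_id x).const_mul κ).cos).ofReal_comp

theorem hasDerivAt_sinTail (hκ : κ ≠ 0) (hu : Continuous u) (hui : Integrable u) (x : ℝ) :
    HasDerivAt (sinTail κ u) (cosTail κ u x) x := by
  have hC := hasDerivAt_setIntegral_Ici (by fun_prop)
    (integrable_ofReal_mul (by fun_prop) (fun t => Real.abs_cos_le_one (κ * t)) hui) x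
  have hS := hasDerivAt_setIntegral_Ici (by fun_prop)
    (integrable_ofReal_mul (by fun_prop) (fun t => Real.abs_sin_le_one (κ * t)) hui) x
  rw [funext (sinTail_eq hui), cosTail_eq hui]
  simp only [Complex.ofReal_div]
  have hκ' : (κ : ℂ) ≠ 0 := Complex.ofReal_ne_zero.2 hκ
  refine ((((hasDerivAt_ofReal_sin_mul κ x).div_const (κ : ℂ)).mul hC).sub
    (((hasDerivAt_ofReal_cos_mul κ x).div_const (κ : ℂ)).mul hS)).congr_deriv ?_
  push_cast
  field_simp
  ring

theorem hasDerivAt_cosTail (hu : Continuous u) (hui : Integrable u) (x : ℝ) :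
    HasDerivAt (cosTail κ u) (-(κ ^ 2 * sinTail κ u x) - u x) x := by
  have hC := hasDerivAt_setIntegral_Ici (by fun_prop)
    (integrable_ofReal_mul (by fun_prop) (fun t => Real.abs_cos_le_one (κ * t)) hui) x
  have hS := hasDerivAt_setIntegral_Ici (by fun_prop)
    (integrable_ofReal_mul (by fun_prop) (fun t => Real.abs_sin_le_one (κ * t)) hui) x
  -- holds for `κ = 0` too, since `0⁻¹ = 0`
  have hκ : (κ : ℂ) ^ 2 * (κ : ℂ)⁻¹ = κ := by
    rcases eq_or_ne (κ : ℂ) 0 with h | h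
    · simp [h]
    · field_simp
  rw [funext (cosTail_eq hui), sinTail_eq hui]
  refine (((hasDerivAt_ofReal_cos_mul κ x).mul hC).add
    ((hasDerivAt_ofReal_sin_mul κ x).mul hS)).congr_deriv ?_
  push_cast
  linear_combination
    (Complex.sin (κ * x) * (∫ t in Ici x, Complex.cos (κ * t) * u t)
      - Complex.cos (κ * x) * (∫ t in Ici x, Complex.sin (κ * t) * u t)) * hκ
    - u x * Complex.cos_sq_add_sin_sq (κ * x)

theorem tendsto_sinTail_atTop (hui : Integrable u) : Tendsto (sinTail κ u) atTop (𝓝 0) :=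
  tendsto_setIntegral_Ici_mul_atTop (C := |κ|⁻¹) (fun x t => by
    rw [Complex.norm_real, Real.norm_eq_abs, abs_div, ← one_div]
    exact div_le_div_of_nonneg_right (Real.abs_sin_le_one _) (abs_nonneg κ)) hui

theorem tendsto_cosTail_atTop (hui : Integrable u) : Tendsto (cosTail κ u) atTop (𝓝 0) :=
  tendsto_setIntegral_Ici_mul_atTop (C := 1) (fun x t => by
    rw [Complex.norm_real, Real.norm_eq_abs]
    exact Real.abs_cos_le_one _) hui

end Volterra

theorem exists_hasDerivAt_of_eq_planeWave_sub_sinTail {q f : ℝ → ℂ} {κ : ℝ} (hκ : κ ≠ 0)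
    (hq : Continuous q) (hf : Continuous f) (hqf : Integrable fun t => q t * f t)
    (heq : ∀ x, f x = planeWave κ x - sinTail κ (fun t => q t * f t) x) :
    ∃ f' : ℝ → ℂ, (∀ x, HasDerivAt f (f' x) x) ∧ (∀ x, HasDerivAt f' ((q x - κ ^ 2) * f x) x) ∧
      Tendsto (fun x => f x - planeWave κ x) atTop (𝓝 0) ∧
      Tendsto (fun x => f' x - Complex.I * κ * planeWave κ x) atTop (𝓝 0) := by
  have hu : Continuous fun t => q t * f t := hq.mul hf
  refine ⟨fun x => Complex.I * κ * planeWave κ x - cosTail κ (fun t => q t * f t) x,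
    fun x => ?_, fun x => ?_, ?_, ?_⟩
  · exact ((hasDerivAt_planeWave κ x).sub (hasDerivAt_sinTail hκ hu hqf x)).congr_of_eventuallyEq
      (Eventually.of_forall heq)
  · refine (((hasDerivAt_planeWave κ x).const_mul (Complex.I * κ)).sub
      (hasDerivAt_cosTail hu hqf x)).congr_deriv ?_
    linear_combination (κ : ℂ) ^ 2 * heq x + (κ : ℂ) ^ 2 * planeWave κ x * Complex.I_sq
  · have h := (tendsto_sinTail_atTop (κ := κ) hqf).neg
    rw [neg_zero] at h
    exact h.congr fun x => by rw [heq x]; ring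
  · have h := (tendsto_cosTail_atTop (κ := κ) hqf).neg
    rw [neg_zero] at h
    exact h.congr fun x => by ring

theorem eq_planeWave_sub_sinTail_comp_neg {κ : ℝ} {f u : ℝ → ℂ}
    (heq : ∀ x, f x = planeWave (-κ) x + ∫ t in Iic x, ((Real.sin (κ * (x - t)) / κ : ℝ) : ℂ) * u t)
    (y : ℝ) : f (-y) = planeWave κ y - sinTail κ (fun t => u (-t)) y := by
  rw [heq, planeWave_neg, neg_neg, sinTail, integral_Ici_eq_integral_Ioi, ← integral_comp_neg_Ioi,
    sub_eq_add_neg, ← integral_neg]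
  congr 2 with t
  rw [show κ * (-y - -t) = -(κ * (y - t)) by ring, Real.sin_neg, neg_div, Complex.ofReal_neg,
    neg_mul]

theorem exists_hasDerivAt_of_eq_planeWave_add_integral_Iic {q f : ℝ → ℂ} {κ : ℝ} (hκ : κ ≠ 0)
    (hq : Continuous q) (hf : Continuous f) (hqf : Integrable fun t => q t * f t)
    (heq : ∀ x, f x = planeWave (-κ) x +
      ∫ t in Iic x, ((Real.sin (κ * (x - t)) / κ : ℝ) : ℂ) * (q t * f t)) :
    ∃ f' : ℝ → ℂ, (∀ x, HasDerivAt f (f' x) x) ∧ (∀ x, HasDerivAt f' ((q x - κ ^ 2) * f x) x) ∧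
      Tendsto (fun x => f x - planeWave (-κ) x) atBot (𝓝 0) ∧
      Tendsto (fun x => f' x - Complex.I * (-κ : ℝ) * planeWave (-κ) x) atBot (𝓝 0) := by
  obtain ⟨g', hg', hg'', hg, hg'lim⟩ := exists_hasDerivAt_of_eq_planeWave_sub_sinTail
    (q := fun t => q (-t)) (f := fun t => f (-t)) hκ (by fun_prop) (by fun_prop) hqf.comp_neg
    (eq_planeWave_sub_sinTail_comp_neg heq)
  refine ⟨fun x => -g' (-x), fun x => ?_, fun x => ?_, ?_, ?_⟩
  · simpa [Function.comp_def] using (hg' (-x)).scomp x (hasDerivAt_neg x)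
  · exact ((hg'' (-x)).scomp x (hasDerivAt_neg x)).neg.congr_deriv (by simp)
  · simpa [Function.comp_def, planeWave_neg] using hg.comp tendsto_neg_atBot_atTop
  · have h := (hg'lim.comp tendsto_neg_atBot_atTop).neg
    rw [neg_zero] at h
    refine h.congr fun x => ?_
    simp only [Function.comp_apply, planeWave_neg, Complex.ofReal_neg]
    ring

noncomputable def wronskian (f f' g g' : ℝ → ℂ) (x : ℝ) : ℂ := f x * g' x - f' x * g x

theorem wronskian_eq_of_hasDerivAt {V f f' g g' : ℝ → ℂ}
    (hf : ∀ x, HasDerivAt f (f' x) x) (hf' : ∀ x, HasDerivAt f' (V x * f x) x)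
    (hg : ∀ x, HasDerivAt g (g' x) x) (hg' : ∀ x, HasDerivAt g' (V x * g x) x) (x y : ℝ) :
    wronskian f f' g g' x = wronskian f f' g g' y := by
  have hW : ∀ x, HasDerivAt (wronskian f f' g g') 0 x := fun x =>
    (((hf x).mul (hg' x)).sub ((hf' x).mul (hg x))).congr_deriv (by ring)
  exact is_const_of_deriv_eq_zero (fun x => (hW x).differentiableAt) (fun x => (hW x).deriv) x y

theorem wronskian_conj_eq {V f f' : ℝ → ℂ} (hV : ∀ x, conj (V x) = V x)
    (hf : ∀ x, HasDerivAt f (f' x) x) (hf' : ∀ x, HasDerivAt f' (V x * f x) x) (x y : ℝ) :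
    wronskian f f' (fun x => conj (f x)) (fun x => conj (f' x)) x =
      wronskian f f' (fun x => conj (f x)) (fun x => conj (f' x)) y :=
  wronskian_eq_of_hasDerivAt hf hf' (fun x => (hf x).star)
    (fun x => (hf' x).star.congr_deriv (by simp [hV])) x y

noncomputable def waveSum (k : ℝ) (c₁ c₂ : ℂ) (x : ℝ) : ℂ :=
  c₁ * planeWave k x + c₂ * planeWave (-k) x

theorem norm_waveSum_le (k : ℝ) (c₁ c₂ : ℂ) (x : ℝ) : ‖waveSum k c₁ c₂ x‖ ≤ ‖c₁‖ + ‖c₂‖ :=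
  (norm_add_le _ _).trans_eq (by simp [norm_planeWave])

-- `waveSum k (I k c₁) (-(I k c₂))` is the derivative of `waveSum k c₁ c₂`.
theorem wronskian_conj_waveSum (k : ℝ) (c₁ c₂ : ℂ) (x : ℝ) :
    wronskian (waveSum k c₁ c₂) (waveSum k (Complex.I * k * c₁) (-(Complex.I * k * c₂)))
      (fun x => conj (waveSum k c₁ c₂ x))
      (fun x => conj (waveSum k (Complex.I * k * c₁) (-(Complex.I * k * c₂)) x)) x =
      2 * Complex.I * k * (‖c₂‖ ^ 2 - ‖c₁‖ ^ 2) := by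
  simp only [wronskian, waveSum, map_add, map_mul, map_neg, conj_planeWave, neg_neg,
    Complex.conj_I, Complex.conj_ofReal]
  linear_combination
    (-2 * Complex.I * k * (c₁ * conj c₁ - c₂ * conj c₂)) * planeWave_mul_planeWave_neg k x
    + 2 * Complex.I * k * (Complex.mul_conj' c₂ - Complex.mul_conj' c₁)

theorem tendsto_mul_conj_sub_mul_conj {l : Filter ℝ} {u v : ℝ → ℂ} (hu : Tendsto u l (𝓝 0))
    (hv : IsBoundedUnder (· ≤ ·) l (norm ∘ v)) :
    Tendsto (fun x => u x * conj (v x) - v x * conj (u x)) l (𝓝 0) := by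
  have hu' : Tendsto (fun x => conj (u x)) l (𝓝 0) := by
    simpa [Function.comp_def] using (Complex.continuous_conj.tendsto 0).comp hu
  have hv' : IsBoundedUnder (· ≤ ·) l (norm ∘ fun x => conj (v x)) := by
    simpa [Function.comp_def] using hv
  simpa using (hu.zero_mul_isBoundedUnder_le hv').sub (isBoundedUnder_le_mul_tendsto_zero hv hu')

theorem tendsto_wronskian_conj {l : Filter ℝ} {f f' : ℝ → ℂ} {k : ℝ} {c₁ c₂ : ℂ}
    (hf : Tendsto (fun x => f x - waveSum k c₁ c₂ x) l (𝓝 0))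
    (hf' : Tendsto (fun x => f' x - waveSum k (Complex.I * k * c₁) (-(Complex.I * k * c₂)) x) l
      (𝓝 0)) :
    Tendsto (wronskian f f' (fun x => conj (f x)) (fun x => conj (f' x))) l
      (𝓝 (2 * Complex.I * k * (‖c₂‖ ^ 2 - ‖c₁‖ ^ 2))) := by
  set φ := waveSum k c₁ c₂
  set φ' := waveSum k (Complex.I * k * c₁) (-(Complex.I * k * c₂))
  have hφ : IsBoundedUnder (· ≤ ·) l (norm ∘ φ) := isBoundedUnder_of ⟨_, norm_waveSum_le k c₁ c₂⟩
  have hφ' : IsBoundedUnder (· ≤ ·) l (norm ∘ φ') := isBoundedUnder_of ⟨_, norm_waveSum_le k _ _⟩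
  -- With `a = f - φ`, `b = f' - φ'` and `B u v = u v̄ - v ū`, the Wronskian of `f` is
  -- `W[φ] + B a φ' - B b φ + B a b`, where `W[φ]` is constant and each `B` term tends to `0`.
  have h := (((tendsto_mul_conj_sub_mul_conj hf hφ').sub (tendsto_mul_conj_sub_mul_conj hf' hφ)).add
    (tendsto_mul_conj_sub_mul_conj hf hf'.norm.isBoundedUnder_le)).const_add
    (2 * Complex.I * k * (‖c₂‖ ^ 2 - ‖c₁‖ ^ 2))
  simp only [sub_zero, add_zero] at h
  refine h.congr fun x => ?_
  rw [← wronskian_conj_waveSum k c₁ c₂ x]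
  simp only [wronskian, map_sub]
  ring

theorem tendsto_sub_linear_combination {l : Filter ℝ} {f g₁ g₂ φ₁ φ₂ : ℝ → ℂ} (c₁ c₂ : ℂ)
    (hf : ∀ x, f x = c₁ * g₁ x + c₂ * g₂ x) (h₁ : Tendsto (fun x => g₁ x - φ₁ x) l (𝓝 0))
    (h₂ : Tendsto (fun x => g₂ x - φ₂ x) l (𝓝 0)) :
    Tendsto (fun x => f x - (c₁ * φ₁ x + c₂ * φ₂ x)) l (𝓝 0) := by
  have h := (h₁.const_mul c₁).add (h₂.const_mul c₂)
  simp only [mul_zero, add_zero] at h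
  exact h.congr fun x => by rw [hf x]; ring

theorem norm_sq_sub_norm_sq_eq_of_tendsto {V f f' : ℝ → ℂ} {k : ℝ} {a₁ a₂ c₁ c₂ : ℂ} (hk : k ≠ 0)
    (hV : ∀ x, conj (V x) = V x)
    (hf : ∀ x, HasDerivAt f (f' x) x) (hf' : ∀ x, HasDerivAt f' (V x * f x) x)
    (hbot : Tendsto (fun x => f x - waveSum k a₁ a₂ x) atBot (𝓝 0))
    (hbot' : Tendsto (fun x => f' x - waveSum k (Complex.I * k * a₁) (-(Complex.I * k * a₂)) x)
      atBot (𝓝 0))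
    (htop : Tendsto (fun x => f x - waveSum k c₁ c₂ x) atTop (𝓝 0))
    (htop' : Tendsto (fun x => f' x - waveSum k (Complex.I * k * c₁) (-(Complex.I * k * c₂)) x)
      atTop (𝓝 0)) :
    ‖c₂‖ ^ 2 - ‖c₁‖ ^ 2 = ‖a₂‖ ^ 2 - ‖a₁‖ ^ 2 := by
  have hconst := fun x => wronskian_conj_eq hV hf hf' x 0
  have hlim :=
    (tendsto_const_nhds_iff.1 ((tendsto_wronskian_conj htop htop').congr hconst)).symm.trans
      (tendsto_const_nhds_iff.1 ((tendsto_wronskian_conj hbot hbot').congr hconst))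
  have h2Ik : 2 * Complex.I * k ≠ 0 := by simp [hk]
  exact_mod_cast mul_left_cancel₀ h2Ik hlim

theorem integrable_of_integrable_one_add_abs_mul_norm {q : ℝ → ℂ} (hq : Continuous q)
    (hq' : Integrable fun x => (1 + |x|) * ‖q x‖) : Integrable q :=
  hq'.mono' hq.aestronglyMeasurable
    (ae_of_all _ fun x => le_mul_of_one_le_left (norm_nonneg _) (by simp))

end JostSolution

open JostSolution

/-- Unitarity of the scattering coefficients: for a real-valued Faddeev-class potential,
if `f₋(k,·) = c₁ f₊(k,·) + c₂ f₊(−k,·)` then `|c₂|² − |c₁|² = 1`. -/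
theorem scattering_coefficients_unitarity (q : ℝ → ℂ) (hq : Continuous q)
    (hqreal : ∀ x : ℝ, (q x).im = 0)
    (hq' : Integrable (fun x => (1 + |x|) * ‖q x‖)) (k : ℝ) (hk : k ≠ 0)
    (fpk fpmk fmk : ℝ → ℂ)
    (hfpk : Continuous fpk) (hfpkb : ∃ C : ℝ, ∀ x, ‖fpk x‖ ≤ C)
    (hfpkeq : ∀ x : ℝ, fpk x = Complex.exp (Complex.I * k * x) -
        ∫ t in Set.Ici x, ((Real.sin (k * (x - t)) / k : ℝ) : ℂ) * q t * fpk t)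
    (hfpmk : Continuous fpmk) (hfpmkb : ∃ C : ℝ, ∀ x, ‖fpmk x‖ ≤ C)
    (hfpmkeq : ∀ x : ℝ, fpmk x = Complex.exp (Complex.I * (-k) * x) -
        ∫ t in Set.Ici x, ((Real.sin ((-k) * (x - t)) / (-k) : ℝ) : ℂ) * q t * fpmk t)
    (hfmk : Continuous fmk) (hfmkb : ∃ C : ℝ, ∀ x, ‖fmk x‖ ≤ C)
    (hfmkeq : ∀ x : ℝ, fmk x = Complex.exp (-(Complex.I * k * x)) +
        ∫ t in Set.Iic x, ((Real.sin (k * (x - t)) / k : ℝ) : ℂ) * q t * fmk t)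
    (c₁ c₂ : ℂ)
    (hc : ∀ x : ℝ, fmk x = c₁ * fpk x + c₂ * fpmk x) :
    ‖c₂‖ ^ 2 - ‖c₁‖ ^ 2 = 1 := by
  have hqf : ∀ f : ℝ → ℂ, Continuous f → (∃ C, ∀ x, ‖f x‖ ≤ C) → Integrable fun t => q t * f t :=
    fun f hf ⟨C, hC⟩ => (integrable_of_integrable_one_add_abs_mul_norm hq hq').mul_bdd
      hf.aestronglyMeasurable (ae_of_all _ hC)
  obtain ⟨fp', hfp', -, hfp, hfp'lim⟩ := exists_hasDerivAt_of_eq_planeWave_sub_sinTail hk hq hfpk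
    (hqf _ hfpk hfpkb) (fun x => by simpa only [planeWave, sinTail, mul_assoc] using hfpkeq x)
  obtain ⟨fpm', hfpm', -, hfpm, hfpm'lim⟩ := exists_hasDerivAt_of_eq_planeWave_sub_sinTail
    (neg_ne_zero.2 hk) hq hfpmk (hqf _ hfpmk hfpmkb)
    (fun x => by simpa only [planeWave, sinTail, mul_assoc, Complex.ofReal_neg] using hfpmkeq x)
  obtain ⟨fm', hfm', hfm'', hfm, hfm'lim⟩ := exists_hasDerivAt_of_eq_planeWave_add_integral_Iic hk
    hq hfmk (hqf _ hfmk hfmkb)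
    (fun x => by
      simpa only [planeWave, mul_assoc, Complex.ofReal_neg, mul_neg, neg_mul] using hfmkeq x)
  have hfm'_eq : ∀ x, fm' x = c₁ * fp' x + c₂ * fpm' x := fun x =>
    (hfm' x).unique (by rw [funext hc]; exact ((hfp' x).const_mul c₁).add ((hfpm' x).const_mul c₂))
  have hflux := norm_sq_sub_norm_sq_eq_of_tendsto (a₁ := 0) (a₂ := 1) hk
    (fun x => by simp [Complex.conj_eq_iff_im.2 (hqreal x)]) hfm' hfm''
    (by simpa [waveSum] using hfm) (by simpa [waveSum] using hfm'lim)
    (tendsto_sub_linear_combination c₁ c₂ hc hfp hfpm)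
    ((tendsto_sub_linear_combination c₁ c₂ hfm'_eq hfp'lim hfpm'lim).congr fun x => by
      simp only [waveSum]; push_cast; ring)
  simpa using hflux
end

section
/- (High-energy asymptotics of the scattering coefficients.) Let q : ℝ → ℂ be continuous with ∫_ℝ (1+|x|)|q(x)| dx < ∞. For each nonzero real k let (c₁(k), c₂(k)) be the unique complex constants with f₋(k,x) = c₁(k) f₊(k,x) + c₂(k) f₊(−k,x) for all x. Then c₂(k) → 1 and c₁(k) → 0 as |k| → ∞. -/
open MeasureTheory Filter

/-!
For `|k|` large the Volterra equations are contractions: the kernel `sin (k (x - t)) / k` is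
bounded by `1 / |k|`, so a bounded solution stays within `2 ‖q‖₁ / |k|` of its plane wave,
uniformly in `x`. Evaluating `f₋ = c₁ f₊(k) + c₂ f₊(-k)` at `x = 0`, where all three plane waves
equal `1`, and at `x = π / (2k)`, where they equal `-i`, `i`, `-i`, gives `c₁ + c₂ ≈ 1` and
`c₁ - c₂ ≈ -1`, up to errors of order `‖q‖₁ / |k|`.
-/

lemma integrable_norm_of_integrable_one_add_abs_mul {E : Type*} [NormedAddCommGroup E]
    {q : ℝ → E} (hq : Integrable (fun x => (1 + |x|) * ‖q x‖)) :
    Integrable (fun x => ‖q x‖) := by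
  have hpos : ∀ x : ℝ, 0 < 1 + |x| := fun x => by positivity
  have hmeas : AEStronglyMeasurable (fun x => ‖q x‖) volume := by
    refine ((continuous_const.add continuous_abs).inv₀ fun x => (hpos x).ne').aestronglyMeasurable
      |>.mul hq.aestronglyMeasurable |>.congr (Eventually.of_forall fun x => ?_)
    simp [inv_mul_cancel_left₀ (hpos x).ne']
  refine hq.mono' hmeas (Eventually.of_forall fun x => ?_)
  rw [Real.norm_eq_abs, abs_norm]
  nlinarith [norm_nonneg (q x), abs_nonneg x]

lemma norm_sub_le_two_mul_of_forall_bound {α F : Type*} [NormedAddCommGroup F] {f g : α → F}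
    {a C : ℝ} (ha₀ : 0 ≤ a) (ha : a ≤ 1 / 2) (hf : ∀ x, ‖f x‖ ≤ C) (hg : ∀ x, ‖g x‖ ≤ 1)
    (h : ∀ M, (∀ x, ‖f x‖ ≤ M) → ∀ x, ‖f x - g x‖ ≤ a * M) (x : α) :
    ‖f x - g x‖ ≤ 2 * a := by
  have : Nonempty α := ⟨x⟩
  have hbdd : BddAbove (Set.range fun y => ‖f y‖) := ⟨C, by rintro _ ⟨y, rfl⟩; exact hf y⟩
  set M := ⨆ y, ‖f y‖
  have hfM : ∀ y, ‖f y‖ ≤ M := le_ciSup hbdd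
  have hM : M ≤ 1 + a * M := ciSup_le fun y =>
    calc ‖f y‖ ≤ ‖f y - g y‖ + ‖g y‖ := norm_le_norm_sub_add _ _
      _ ≤ 1 + a * M := by linarith [h M hfM y, hg y]
  have hM2 : M ≤ 2 := by nlinarith [(norm_nonneg _).trans (hfM x)]
  nlinarith [h M hfM x]

lemma norm_setIntegral_sin_kernel_le {q : ℝ → ℂ} (hq : Integrable (fun t => ‖q t‖))
    (k x : ℝ) (S : Set ℝ) {f : ℝ → ℂ} {M : ℝ} (hf : ∀ t, ‖f t‖ ≤ M) :
    ‖∫ t in S, ((Real.sin (k * (x - t)) / k : ℝ) : ℂ) * q t * f t‖ ≤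
      (∫ t, ‖q t‖) / |k| * M := by
  have hM : 0 ≤ M := (norm_nonneg _).trans (hf 0)
  have hpt : ∀ t, ‖((Real.sin (k * (x - t)) / k : ℝ) : ℂ) * q t * f t‖ ≤ ‖q t‖ * (M / |k|) := by
    intro t
    have hsin : |Real.sin (k * (x - t))| / |k| ≤ 1 / |k| := by
      gcongr
      exact Real.abs_sin_le_one _
    rw [norm_mul, norm_mul, Complex.norm_real, Real.norm_eq_abs, abs_div]
    calc |Real.sin (k * (x - t))| / |k| * ‖q t‖ * ‖f t‖ ≤ 1 / |k| * ‖q t‖ * M := by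
          gcongr
          exact hf t
      _ = ‖q t‖ * (M / |k|) := by ring
  calc _ ≤ ∫ t in S, ‖q t‖ * (M / |k|) :=
        norm_integral_le_of_norm_le (hq.mul_const _).restrict (Eventually.of_forall hpt)
    _ = (∫ t in S, ‖q t‖) * (M / |k|) := integral_mul_const _ _
    _ ≤ (∫ t, ‖q t‖) * (M / |k|) := by
        gcongr ?_ * _
        exact setIntegral_le_integral hq (Eventually.of_forall fun t => norm_nonneg _)
    _ = (∫ t, ‖q t‖) / |k| * M := by ring

lemma norm_sub_le_of_volterra {q : ℝ → ℂ} (hq : Integrable (fun t => ‖q t‖)) {k : ℝ}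
    (hk : 2 * ∫ t, ‖q t‖ ≤ |k|) (S : ℝ → Set ℝ) {f E : ℝ → ℂ} (hf : ∃ C, ∀ x, ‖f x‖ ≤ C)
    (hE : ∀ x, ‖E x‖ ≤ 1)
    (heq : ∀ x, ‖f x - E x‖ =
      ‖∫ t in S x, ((Real.sin (k * (x - t)) / k : ℝ) : ℂ) * q t * f t‖) (x : ℝ) :
    ‖f x - E x‖ ≤ 2 * ((∫ t, ‖q t‖) / |k|) := by
  obtain ⟨C, hC⟩ := hf
  refine norm_sub_le_two_mul_of_forall_bound (by positivity) ?_ hC hE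
    (fun M hM y => (heq y).trans_le (norm_setIntegral_sin_kernel_le hq k y (S y) hM)) x
  exact div_le_of_le_mul₀ (abs_nonneg k) (by norm_num) (by linarith)

section Jost

variable {q : ℝ → ℂ} {k : ℝ} {f : ℝ → ℂ}

lemma norm_sub_exp_le_of_right_jost (hq : Integrable (fun t => ‖q t‖))
    (hk : 2 * ∫ t, ‖q t‖ ≤ |k|) (hf : ∃ C, ∀ x, ‖f x‖ ≤ C)
    (heq : ∀ x : ℝ, f x = Complex.exp (Complex.I * k * x) -
      ∫ t in Set.Ici x, ((Real.sin (k * (x - t)) / k : ℝ) : ℂ) * q t * f t) (x : ℝ) :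
    ‖f x - Complex.exp (Complex.I * k * x)‖ ≤ 2 * ((∫ t, ‖q t‖) / |k|) :=
  norm_sub_le_of_volterra (E := fun x => Complex.exp (Complex.I * k * x)) hq hk _ hf
    (fun x => by simp [Complex.norm_exp]) (fun x => by rw [heq x, sub_sub_cancel_left, norm_neg]) x

lemma norm_sub_exp_le_of_left_jost (hq : Integrable (fun t => ‖q t‖))
    (hk : 2 * ∫ t, ‖q t‖ ≤ |k|) (hf : ∃ C, ∀ x, ‖f x‖ ≤ C)
    (heq : ∀ x : ℝ, f x = Complex.exp (-(Complex.I * k * x)) +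
      ∫ t in Set.Iic x, ((Real.sin (k * (x - t)) / k : ℝ) : ℂ) * q t * f t) (x : ℝ) :
    ‖f x - Complex.exp (-(Complex.I * k * x))‖ ≤ 2 * ((∫ t, ‖q t‖) / |k|) :=
  norm_sub_le_of_volterra (E := fun x => Complex.exp (-(Complex.I * k * x))) hq hk _ hf
    (fun x => by simp [Complex.norm_exp]) (fun x => by rw [heq x, add_sub_cancel_left]) x

end Jost

lemma norm_sub_combination_le {R : Type*} [NormedRing R] {y a b w u v c₁ c₂ : R} {ε : ℝ}
    (hy : y = c₁ * a + c₂ * b) (hyw : ‖y - w‖ ≤ ε) (hau : ‖a - u‖ ≤ ε) (hbv : ‖b - v‖ ≤ ε) :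
    ‖w - (c₁ * u + c₂ * v)‖ ≤ ε * (1 + ‖c₁‖ + ‖c₂‖) := by
  have hsplit : w - (c₁ * u + c₂ * v) = -(y - w) + c₁ * (a - u) + c₂ * (b - v) := by
    rw [hy]; noncomm_ring
  rw [hsplit]
  refine (norm_add₃_le ..).trans ?_
  rw [norm_neg]
  nlinarith [norm_nonneg c₁, norm_nonneg c₂, norm_mul_le c₁ (a - u), norm_mul_le c₂ (b - v)]

lemma norm_le_of_norm_add_le_of_norm_sub_le {E : Type*} [NormedAddCommGroup E]
    [NormedSpace ℝ E] {u v : E} {δ : ℝ} (hadd : ‖u + v‖ ≤ δ) (hsub : ‖u - v‖ ≤ δ) :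
    ‖u‖ ≤ δ ∧ ‖v‖ ≤ δ := by
  have hu : 2 * ‖u‖ = ‖(u + v) + (u - v)‖ := by
    rw [show (u + v) + (u - v) = (2 : ℝ) • u by module, norm_smul]; norm_num
  have hv : 2 * ‖v‖ = ‖(u + v) - (u - v)‖ := by
    rw [show (u + v) - (u - v) = (2 : ℝ) • v by module, norm_smul]; norm_num
  constructor
  · linarith [norm_add_le (u + v) (u - v)]
  · linarith [norm_sub_le (u + v) (u - v)]

lemma norm_coeffs_le_of_plane_wave_approx {k ε : ℝ} (hk : k ≠ 0) (hε : ε ≤ 1 / 4)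
    {fp fn fm : ℝ → ℂ} {c₁ c₂ : ℂ} (hc : ∀ x, fm x = c₁ * fp x + c₂ * fn x)
    (hfp : ∀ x : ℝ, ‖fp x - Complex.exp (Complex.I * k * x)‖ ≤ ε)
    (hfn : ∀ x : ℝ, ‖fn x - Complex.exp (-(Complex.I * k * x))‖ ≤ ε)
    (hfm : ∀ x : ℝ, ‖fm x - Complex.exp (-(Complex.I * k * x))‖ ≤ ε) :
    ‖c₁‖ ≤ 4 * ε ∧ ‖c₂ - 1‖ ≤ 4 * ε := by
  set x₀ : ℝ := Real.pi / (2 * k)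
  have hwave : Complex.exp (Complex.I * k * x₀) = Complex.I := by
    have harg : Complex.I * k * x₀ = Real.pi / 2 * Complex.I := by
      have : (k : ℂ) ≠ 0 := Complex.ofReal_ne_zero.2 hk
      simp only [x₀, Complex.ofReal_div, Complex.ofReal_mul, Complex.ofReal_ofNat]
      field_simp
    rw [harg, Complex.exp_pi_div_two_mul_I]
  have hwave' : Complex.exp (-(Complex.I * k * x₀)) = -Complex.I := by
    rw [Complex.exp_neg, hwave, Complex.inv_I]
  have h₀ := norm_sub_combination_le (hc 0) (hfm 0) (hfp 0) (hfn 0)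
  have h₁ := norm_sub_combination_le (hc x₀) (hfm x₀) (hfp x₀) (hfn x₀)
  simp only [Complex.ofReal_zero, mul_zero, neg_zero, Complex.exp_zero, mul_one] at h₀
  rw [hwave, hwave'] at h₁
  have hsum : ‖c₁ + (c₂ - 1)‖ ≤ ε * (1 + ‖c₁‖ + ‖c₂‖) := by
    rwa [show c₁ + (c₂ - 1) = -(1 - (c₁ + c₂)) by ring, norm_neg]
  have hdiff : ‖c₁ - (c₂ - 1)‖ ≤ ε * (1 + ‖c₁‖ + ‖c₂‖) := by
    rwa [show c₁ - (c₂ - 1) = Complex.I * (-Complex.I - (c₁ * Complex.I + c₂ * -Complex.I)) by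
      linear_combination (1 + c₁ - c₂) * Complex.I_sq, norm_mul, Complex.norm_I, one_mul]
  obtain ⟨hc₁, hc₂⟩ := norm_le_of_norm_add_le_of_norm_sub_le hsum hdiff
  have hc₂_norm : ‖c₂‖ ≤ ‖c₂ - 1‖ + 1 := by simpa using norm_le_norm_sub_add c₂ 1
  have hε₀ : 0 ≤ ε := (norm_nonneg _).trans (hfp 0)
  -- both norms are `≤ ε (2 + ‖c₁‖ + ‖c₂ - 1‖)`, which with `ε ≤ 1/4` caps their sum at `2`
  constructor <;> nlinarith [norm_nonneg c₁, norm_nonneg (c₂ - 1)]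

theorem scattering_coefficients_high_energy_general (q : ℝ → ℂ)
    (hq' : Integrable (fun x => (1 + |x|) * ‖q x‖))
    (fp fm : ℝ → ℝ → ℂ) (c₁ c₂ : ℝ → ℂ)
    (hfp : ∀ k : ℝ, k ≠ 0 → Continuous (fp k) ∧ (∃ C : ℝ, ∀ x, ‖fp k x‖ ≤ C) ∧
        ∀ x : ℝ, fp k x = Complex.exp (Complex.I * k * x) -
          ∫ t in Set.Ici x, ((Real.sin (k * (x - t)) / k : ℝ) : ℂ) * q t * fp k t)
    (hfm : ∀ k : ℝ, k ≠ 0 → Continuous (fm k) ∧ (∃ C : ℝ, ∀ x, ‖fm k x‖ ≤ C) ∧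
        ∀ x : ℝ, fm k x = Complex.exp (-(Complex.I * k * x)) +
          ∫ t in Set.Iic x, ((Real.sin (k * (x - t)) / k : ℝ) : ℂ) * q t * fm k t)
    (hc : ∀ k : ℝ, k ≠ 0 → ∀ x : ℝ, fm k x = c₁ k * fp k x + c₂ k * fp (-k) x) :
    Tendsto c₂ (Filter.cocompact ℝ) (nhds 1) ∧
    Tendsto c₁ (Filter.cocompact ℝ) (nhds 0) := by
  have hq := integrable_norm_of_integrable_one_add_abs_mul hq'
  set Q := ∫ t, ‖q t‖
  have hQ : 0 ≤ Q := integral_nonneg fun t => norm_nonneg _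
  have hbound : ∀ k : ℝ, 8 * Q < |k| → ‖c₁ k‖ ≤ 8 * (Q / |k|) ∧ ‖c₂ k - 1‖ ≤ 8 * (Q / |k|) := by
    intro k hkQ
    have hk : k ≠ 0 := abs_pos.1 (hQ.trans_lt (by linarith))
    have hε : 2 * (Q / |k|) ≤ 1 / 4 := by
      rw [← mul_div_assoc, div_le_iff₀ (by linarith)]; linarith
    obtain ⟨-, hbp, hep⟩ := hfp k hk
    obtain ⟨-, hbn, hen⟩ := hfp (-k) (neg_ne_zero.2 hk)
    obtain ⟨-, hbm, hem⟩ := hfm k hk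
    have hp := norm_sub_exp_le_of_right_jost hq (by linarith) hbp hep
    have hn := norm_sub_exp_le_of_right_jost hq (by rw [abs_neg]; linarith) hbn hen
    have hm := norm_sub_exp_le_of_left_jost hq (by linarith) hbm hem
    simp only [abs_neg, Complex.ofReal_neg, mul_neg, neg_mul] at hn
    have key := norm_coeffs_le_of_plane_wave_approx hk hε (hc k hk) hp hn hm
    constructor <;> linarith [key.1, key.2]
  have habs : Tendsto (fun k : ℝ => |k|) (cocompact ℝ) atTop := tendsto_norm_cocompact_atTop
  have hlim : Tendsto (fun k : ℝ => 8 * (Q / |k|)) (cocompact ℝ) (nhds 0) := by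
    simpa using (tendsto_const_nhds.div_atTop habs).const_mul 8
  have hev := (habs.eventually_gt_atTop (8 * Q)).mono hbound
  exact ⟨tendsto_sub_nhds_zero_iff.1 (squeeze_zero_norm' (hev.mono fun k h => h.2) hlim),
    squeeze_zero_norm' (hev.mono fun k h => h.1) hlim⟩

/-- High-energy asymptotics of the scattering coefficients: with
`f₋(k,·) = c₁(k) f₊(k,·) + c₂(k) f₊(−k,·)` for every nonzero `k`, one has
`c₂(k) → 1` and `c₁(k) → 0` as `|k| → ∞`. -/
theorem scattering_coefficients_high_energy (q : ℝ → ℂ) (hq : Continuous q)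
    (hq' : Integrable (fun x => (1 + |x|) * ‖q x‖))
    (fp fm : ℝ → ℝ → ℂ) (c₁ c₂ : ℝ → ℂ)
    (hfp : ∀ k : ℝ, k ≠ 0 → Continuous (fp k) ∧ (∃ C : ℝ, ∀ x, ‖fp k x‖ ≤ C) ∧
        ∀ x : ℝ, fp k x = Complex.exp (Complex.I * k * x) -
          ∫ t in Set.Ici x, ((Real.sin (k * (x - t)) / k : ℝ) : ℂ) * q t * fp k t)
    (hfm : ∀ k : ℝ, k ≠ 0 → Continuous (fm k) ∧ (∃ C : ℝ, ∀ x, ‖fm k x‖ ≤ C) ∧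
        ∀ x : ℝ, fm k x = Complex.exp (-(Complex.I * k * x)) +
          ∫ t in Set.Iic x, ((Real.sin (k * (x - t)) / k : ℝ) : ℂ) * q t * fm k t)
    (hc : ∀ k : ℝ, k ≠ 0 → ∀ x : ℝ, fm k x = c₁ k * fp k x + c₂ k * fp (-k) x) :
    Tendsto c₂ (Filter.cocompact ℝ) (nhds 1) ∧
    Tendsto c₁ (Filter.cocompact ℝ) (nhds 0) :=
  scattering_coefficients_high_energy_general q hq' fp fm c₁ c₂ hfp hfm hc
end
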